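/- arXiv:1106.0728 — 4 statements merged into one kernel-verified Lean document; each statement's English description precedes it below -/
import Mathlib

section
/- (i) The correspondence (φ,ψ) ↦ φ is a bijection from 𝒢_{d,d} onto 𝒢_d. (ii) If (φ,ψ) ∈ 𝒢_{d,d} then τ∘ψ∘τ ∈ 𝒢_d, where τ : ℝ^d → ℝ^d is the involution x ↦ −x. (iii) Every φ ∈ 𝒢_d is of the form (x', x_d) ↦ (L(x'), A(x_d) + Q(x')) for some invertible affine endomorphism L of ℝ^{d−1}, some invertible affine endomorphism A of ℝ, and some polynomial Q : ℝ^{d−1} → ℝ of degree ≤ 2; the pair (L,A) is unrestricted, and Q takes the form Q = q + a where q is a homogeneous polynomial of degree 2 uniquely determined by (L,A), while a is an arbitrary affine mapping. -/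
open MeasureTheory Filter Set
open scoped ENNReal RealInnerProductSpace

noncomputable section

namespace RadonParaboloid

/-- `ℝ^{d-1}` as a Euclidean space. -/
abbrev Eh (d : ℕ) := EuclideanSpace ℝ (Fin (d - 1))

/-- `ℝ^d`, identified with `ℝ^{d-1} × ℝ`, with coordinates `x = (x', x_d)`. -/
abbrev E (d : ℕ) := Eh d × ℝ

/-- The Radon-like transform: convolution with the (affine) measure on the paraboloid
`{x_d = |x'|^2}`, i.e. `Tf(x) = ∫_{ℝ^{d-1}} f(x' - t, x_d - |t|^2) dt`. -/
def T (d : ℕ) (f : E d → ℝ) : E d → ℝ :=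
  fun x => ∫ t : Eh d, f (x.1 - t, x.2 - ‖t‖ ^ 2)

/-- The transpose of `T` : `T*g(y) = ∫_{ℝ^{d-1}} g(y' + t, y_d + |t|^2) dt`. -/
def Tstar (d : ℕ) (g : E d → ℝ) : E d → ℝ :=
  fun y => ∫ t : Eh d, g (y.1 + t, y.2 + ‖t‖ ^ 2)

/-- The exponent `p = (d+1)/d`, as an extended nonnegative real. -/
def pexp (d : ℕ) : ℝ≥0∞ := ENNReal.ofReal (((d : ℝ) + 1) / d)

/-- The exponent `q = d + 1`, as an extended nonnegative real. -/
def qexp (d : ℕ) : ℝ≥0∞ := (d : ℝ≥0∞) + 1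

/-- The exponent `p = (d+1)/d` as a real number. -/
def pR (d : ℕ) : ℝ := ((d : ℝ) + 1) / d

/-- The optimal constant `A` in the inequality `‖Tf‖_q ≤ A ‖f‖_p`. -/
def Aconst (d : ℕ) : ℝ≥0∞ :=
  ⨆ (f : E d → ℝ) (_ : 0 ≤ f) (_ : eLpNorm f (pexp d) volume = 1),
    eLpNorm (T d f) (qexp d) volume

/-- An extremizer: a nonnegative `f ∈ L^p` with `‖Tf‖_q = A ‖f‖_p ≠ 0`. -/
def IsExtremizer (d : ℕ) (f : E d → ℝ) : Prop :=
  0 ≤ f ∧ MemLp f (pexp d) volume ∧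
    eLpNorm (T d f) (qexp d) volume = Aconst d * eLpNorm f (pexp d) volume ∧
    eLpNorm f (pexp d) volume ≠ 0

/-- An extremizing sequence: nonnegative `f_ν ∈ L^p` with `‖f_ν‖_p = 1` and `‖T f_ν‖_q → A`. -/
def IsExtremizingSeq (d : ℕ) (f : ℕ → E d → ℝ) : Prop :=
  (∀ ν, 0 ≤ f ν) ∧ (∀ ν, MemLp (f ν) (pexp d) volume) ∧
    (∀ ν, eLpNorm (f ν) (pexp d) volume = 1) ∧
    Tendsto (fun ν => eLpNorm (T d (f ν)) (qexp d) volume) atTop (nhds (Aconst d))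

/-- `Θ(x,y) = x_d - y_d - |x' - y'|^2`. -/
def Theta (d : ℕ) (x y : E d) : ℝ := x.2 - y.2 - ‖x.1 - y.1‖ ^ 2

/-- A `C^∞` diffeomorphism of `ℝ^d`. -/
def IsSmoothDiffeo (d : ℕ) (φ : E d → E d) : Prop :=
  ∃ φinv : E d → E d, ContDiff ℝ (⊤ : ℕ∞) φ ∧ ContDiff ℝ (⊤ : ℕ∞) φinv ∧
    Function.LeftInverse φinv φ ∧ Function.RightInverse φinv φ

/-- The group `𝒢_{d,d}` of pairs of diffeomorphisms preserving the incidence relation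
in the strong sense `Θ(φ(x), ψ(y)) = λ Θ(x,y)`. -/
def Gdd (d : ℕ) : Set ((E d → E d) × (E d → E d)) :=
  { Φ | IsSmoothDiffeo d Φ.1 ∧ IsSmoothDiffeo d Φ.2 ∧
      ∃ lam : ℝ, lam ≠ 0 ∧ ∀ x y, Theta d (Φ.1 x) (Φ.2 y) = lam * Theta d x y }

/-- The symmetry group `𝒢_d`. -/
def Gd (d : ℕ) : Set (E d → E d) := { φ | ∃ ψ, (φ, ψ) ∈ Gdd d }

/-- The (constant) Jacobian determinant of `φ ∈ 𝒢_d`. -/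
def jac (d : ℕ) (φ : E d → E d) : ℝ :=
  |LinearMap.det (fderiv ℝ φ 0).toLinearMap|

/-- The action `φ* f(x) = f(φ(x)) J_φ^{d/(d+1)}` of a symmetry on functions. -/
def pullback (d : ℕ) (φ : E d → E d) (f : E d → ℝ) : E d → ℝ :=
  fun x => f (φ x) * jac d φ ^ ((d : ℝ) / ((d : ℝ) + 1))

/-- The data of a paraball: a point `z = (x̄, x̄⋆)` of the incidence manifold, an orthonormal
basis `e` of `ℝ^{d-1}`, radii `r`, and a height `ρ` (here called `rad`). -/
structure Paraball (d : ℕ) where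
  xb : E d
  xs : E d
  incid : xs.2 - xb.2 = ‖xs.1 - xb.1‖ ^ 2
  e : OrthonormalBasis (Fin (d - 1)) ℝ (Eh d)
  r : Fin (d - 1) → ℝ
  hr : ∀ j, 0 < r j
  rad : ℝ
  hrad : 0 < rad

/-- The paraball `B(z,e,r,ρ)` as a subset of `ℝ^d`. -/
def Paraball.carrier {d : ℕ} (B : Paraball d) : Set (E d) :=
  { x | (∑ j, ⟪x.1 - B.xb.1, B.e j⟫ ^ 2 / B.r j ^ 2) < 1 ∧
        |x.2 - B.xs.2 - ‖x.1 - B.xs.1‖ ^ 2| < B.rad }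

/-- The expanded paraball `λ B(z,e,r,ρ)`. -/
def Paraball.expanded {d : ℕ} (B : Paraball d) (lam : ℝ) : Set (E d) :=
  { x | (∑ j, ⟪x.1 - B.xb.1, B.e j⟫ ^ 2 / B.r j ^ 2) < lam ^ 2 ∧
        |x.2 - B.xs.2 - ‖x.1 - B.xs.1‖ ^ 2| < lam * B.rad }

/-- The balanced convex subset `𝒞 ⊆ ℝ^{d-1}` associated to a paraball. -/
def Paraball.cbody {d : ℕ} (B : Paraball d) : Set (Eh d) :=
  { v | (∑ j, ⟪v, B.e j⟫ ^ 2 / B.r j ^ 2) < 1 }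

/-- The quasidistance `ϱ` between two paraballs. -/
def varrho {d : ℕ} (B1 B2 : Paraball d) : ℝ :=
  max B1.rad B2.rad / min B1.rad B2.rad
  + sSup ((fun v => ∑ j, ⟪v, B2.e j⟫ ^ 2 / B2.r j ^ 2) '' B1.cbody)
  + sSup ((fun v => ∑ j, ⟪v, B1.e j⟫ ^ 2 / B1.r j ^ 2) '' B2.cbody)
  + ∑ j, ⟪B1.xb.1 - B2.xb.1, B1.e j⟫ ^ 2 / B1.r j ^ 2
  + ∑ j, ⟪B1.xb.1 - B2.xb.1, B2.e j⟫ ^ 2 / B2.r j ^ 2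
  + ∑ j, ⟪B1.xs.1 - B2.xs.1, B1.e j⟫ ^ 2 / (B1.rad / B1.r j) ^ 2
  + ∑ j, ⟪B1.xs.1 - B2.xs.1, B2.e j⟫ ^ 2 / (B2.rad / B2.r j) ^ 2
  + |B2.xb.2 - B1.xs.2 - ‖B2.xb.1 - B1.xs.1‖ ^ 2| / B1.rad
  + |B1.xb.2 - B2.xs.2 - ‖B1.xb.1 - B2.xs.1‖ ^ 2| / B2.rad

/-- A rough level set decomposition `f = Σ_{j∈ℤ} 2^j f_j`, `f_j ↔ E_j`. -/
def IsRoughDecomp (d : ℕ) (f : E d → ℝ) (fj : ℤ → E d → ℝ) (Ej : ℤ → Set (E d)) : Prop :=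
  (∀ j, MeasurableSet (Ej j)) ∧
  Pairwise (Function.onFun Disjoint Ej) ∧
  (∀ j, ∀ x, x ∉ Ej j → fj j x = 0) ∧
  (∀ j, ∀ᵐ x ∂(volume : Measure (E d)), x ∈ Ej j → 1 ≤ fj j x ∧ fj j x < 2) ∧
  (∀ x, f x = ∑' j : ℤ, (2 : ℝ) ^ j * fj j x)

/-- `‖g‖_{C^1} ≤ R`. -/
def C1NormLe (d : ℕ) (g : E d → ℝ) (R : ℝ) : Prop :=
  ContDiff ℝ 1 g ∧ ∀ x, |g x| ≤ R ∧ ‖fderiv ℝ g x‖ ≤ R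

end RadonParaboloid

/-!
Polarizing `Θ(φ x, ψ y) = λ Θ(x, y)` in both variables gives
`⟪(φ x)' - (φ x̃)', (ψ y)' - (ψ ỹ)'⟫ = λ ⟪x' - x̃', y' - ỹ'⟫`. Since `ψ` is onto, the vectors
`(ψ y)' - (ψ ỹ)'` exhaust `ℝ^{d-1}`, so `(φ x)'` depends on `x'` alone, affinely and injectively;
putting `y = 0` in the identity then gives the last coordinate of `φ`. Conversely each such normal
form has an explicit partner `ψ` of the same triangular shape. The partner is unique because
`Θ(·, u)` determines `u`, and the quadratic part is unique because a quadratic form that is an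
affine function vanishes.
-/

theorem AffineEquiv.apply_eq_linear_add {k V W : Type*} [Ring k] [AddCommGroup V] [Module k V]
    [AddCommGroup W] [Module k W] (L : V ≃ᵃ[k] W) (u : V) : L u = L.linear u + L 0 :=
  congrFun L.toAffineMap.decomp u

theorem AffineMap.contDiff_of_finiteDimensional {V W : Type*} [NormedAddCommGroup V]
    [NormedSpace ℝ V] [FiniteDimensional ℝ V] [NormedAddCommGroup W] [NormedSpace ℝ W]
    {n : WithTop ℕ∞} (f : V →ᵃ[ℝ] W) : ContDiff ℝ n f :=
  (⟨f, f.continuous_of_finiteDimensional⟩ : V →ᴬ[ℝ] W).contDiff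

section InnerProduct

variable {V : Type*} [NormedAddCommGroup V] [InnerProductSpace ℝ V]

theorem exists_linearMap_coe_eq_of_inner {g : V → V} (h : ∀ v, ∃ s, ∀ u, ⟪g u, v⟫ = ⟪u, s⟫) :
    ∃ M : V →ₗ[ℝ] V, ⇑M = g := by
  choose σ hσ using h
  refine ⟨{ toFun := g, map_add' := fun u u' => ?_, map_smul' := fun t u => ?_ }, rfl⟩
  · exact ext_inner_right ℝ fun v => by simp only [inner_add_left, hσ]
  · exact ext_inner_right ℝ fun v => by simp only [real_inner_smul_left, hσ, RingHom.id_apply]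

theorem LinearMap.apply_self_eq_zero_of_eq_affine (B : V →ₗ[ℝ] V →ₗ[ℝ] ℝ) {w : V} {c : ℝ}
    (h : ∀ u, B u u = ⟪u, w⟫ + c) (u : V) : B u u = 0 := by
  have h0 := h 0
  have hneg := h (-u)
  simp only [map_zero, inner_zero_left, map_neg, LinearMap.neg_apply,
    neg_neg, inner_neg_left] at h0 hneg
  linarith [h u]

variable [FiniteDimensional ℝ V]

def contragredient (A : V ≃ₗ[ℝ] V) : V ≃ₗ[ℝ] V :=
  LinearEquiv.ofLinearMap (LinearMap.adjoint (A.symm : V →ₗ[ℝ] V))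
    (LinearMap.adjoint (A : V →ₗ[ℝ] V))
    (by rw [← LinearMap.adjoint_comp]; simp)
    (by rw [← LinearMap.adjoint_comp]; simp)

theorem inner_apply_contragredient (A : V ≃ₗ[ℝ] V) (u z : V) :
    ⟪A u, contragredient A z⟫ = ⟪u, z⟫ := by
  simp [contragredient, LinearMap.adjoint_inner_right]

end InnerProduct

namespace RadonParaboloid

variable {d : ℕ}

theorem theta_neg_neg (x y : E d) : Theta d (-y) (-x) = Theta d x y := by
  simp only [Theta, Prod.fst_neg, Prod.snd_neg, neg_sub_neg]

theorem theta_polarization (x x' y y' : E d) :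
    Theta d x y - Theta d x' y - Theta d x y' + Theta d x' y' = 2 * ⟪x.1 - x'.1, y.1 - y'.1⟫ := by
  simp only [Theta, norm_sub_sq_real, inner_sub_left, inner_sub_right]
  ring

theorem eq_of_forall_theta_eq {u v : E d} (h : ∀ a, Theta d a u = Theta d a v) : u = v := by
  have hu := h (u.1, 0)
  have hv := h (v.1, 0)
  simp only [Theta, sub_self, norm_zero, norm_sub_rev v.1 u.1] at hu hv
  have hfst : u.1 = v.1 := by
    rw [← sub_eq_zero, ← norm_eq_zero]
    nlinarith [norm_nonneg (u.1 - v.1)]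
  refine Prod.ext hfst ?_
  rw [hfst, sub_self, norm_zero] at hu
  linarith

theorem IsSmoothDiffeo.surjective {φ : E d → E d} (h : IsSmoothDiffeo d φ) :
    Function.Surjective φ :=
  let ⟨_, _, _, _, hr⟩ := h; hr.surjective

theorem IsSmoothDiffeo.conj_neg {φ : E d → E d} (h : IsSmoothDiffeo d φ) :
    IsSmoothDiffeo d fun x => -φ (-x) := by
  obtain ⟨φinv, hφ, hφinv, hl, hr⟩ := h
  exact ⟨fun x => -φinv (-x), (hφ.comp contDiff_neg).neg, (hφinv.comp contDiff_neg).neg,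
    fun x => by simp only [neg_neg, hl (-x)], fun x => by simp only [neg_neg, hr (-x)]⟩

def triangular (L : Eh d ≃ᵃ[ℝ] Eh d) (α : ℝ) (G : Eh d → ℝ) : E d → E d :=
  fun x => (L x.1, α * x.2 + G x.1)

theorem isSmoothDiffeo_triangular (L : Eh d ≃ᵃ[ℝ] Eh d) {α : ℝ} (hα : α ≠ 0) {G : Eh d → ℝ}
    (hG : ContDiff ℝ (⊤ : ℕ∞) G) : IsSmoothDiffeo d (triangular L α G) := by
  have hL : ContDiff ℝ (⊤ : ℕ∞) fun x : E d => L x.1 :=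
    (L.toAffineMap.contDiff_of_finiteDimensional).comp contDiff_fst
  have hLsymm : ContDiff ℝ (⊤ : ℕ∞) fun x : E d => L.symm x.1 :=
    (L.symm.toAffineMap.contDiff_of_finiteDimensional).comp contDiff_fst
  refine ⟨fun z => (L.symm z.1, α⁻¹ * (z.2 - G (L.symm z.1))),
    hL.prodMk ((contDiff_const.mul contDiff_snd).add (hG.comp contDiff_fst)),
    hLsymm.prodMk (contDiff_const.mul (contDiff_snd.sub (hG.comp hLsymm))),
    fun x => ?_, fun z => ?_⟩
  · simp [triangular, hα]
  · simp [triangular, hα]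

theorem triangular_injective {L L' : Eh d ≃ᵃ[ℝ] Eh d} {α α' : ℝ} {G G' : Eh d → ℝ}
    (h : triangular L α G = triangular L' α' G') : L = L' ∧ α = α' ∧ G = G' := by
  have hx := fun x => congrFun h x
  simp only [triangular, Prod.mk.injEq] at hx
  have hα : α = α' := by linarith [(hx (0, 1)).2, (hx (0, 0)).2]
  refine ⟨AffineEquiv.ext fun u => (hx (u, 0)).1, hα, funext fun u => ?_⟩
  simpa using (hx (u, 0)).2

theorem Gdd.swap_conj_neg {Φ : (E d → E d) × (E d → E d)} (h : Φ ∈ Gdd d) :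
    (fun x => -Φ.2 (-x), fun y => -Φ.1 (-y)) ∈ Gdd d := by
  obtain ⟨hφ, hψ, lam, hlam, hΘ⟩ := h
  refine ⟨hψ.conj_neg, hφ.conj_neg, lam, hlam, fun x y => ?_⟩
  rw [theta_neg_neg, hΘ, theta_neg_neg]

theorem eq_of_theta_comp_eq {φ ψ ψ' : E d → E d} {lam lam' : ℝ} (hφ : Function.Surjective φ)
    (hlam : lam ≠ 0) (h : ∀ x y, Theta d (φ x) (ψ y) = lam * Theta d x y)
    (h' : ∀ x y, Theta d (φ x) (ψ' y) = lam' * Theta d x y) : ψ = ψ' := by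
  funext y
  have key : ∀ a, lam' * Theta d a (ψ y) = lam * Theta d a (ψ' y) := fun a => by
    obtain ⟨x, rfl⟩ := hφ a
    rw [h, h']
    ring
  have hlam' : lam' = lam := by
    have k1 := key (0, 1)
    have k0 := key (0, 0)
    simp only [Theta] at k1 k0
    linear_combination k1 - k0
  subst hlam'
  exact eq_of_forall_theta_eq fun a => mul_left_cancel₀ hlam (key a)

def quadraticPart (L : Eh d ≃ᵃ[ℝ] Eh d) (α : ℝ) : Eh d →ₗ[ℝ] Eh d →ₗ[ℝ] ℝ :=
  (innerₗ (Eh d)).compl₁₂ (L.linear : Eh d →ₗ[ℝ] Eh d) L.linear - α • innerₗ (Eh d)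

theorem quadraticPart_apply_self (L : Eh d ≃ᵃ[ℝ] Eh d) (α : ℝ) (u : Eh d) :
    quadraticPart L α u u = ‖L.linear u‖ ^ 2 - α * ‖u‖ ^ 2 := by
  simp [quadraticPart]

def normalForm (L : Eh d ≃ᵃ[ℝ] Eh d) (α : ℝ) (w : Eh d) (c : ℝ) : E d → E d :=
  triangular L α fun u => quadraticPart L α u u + ⟪u, w⟫ + c

section Incidence

variable {φ ψ : E d → E d} {lam : ℝ}

theorem inner_fst_sub_eq (h : ∀ x y, Theta d (φ x) (ψ y) = lam * Theta d x y) (x x' y y' : E d) :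
    ⟪(φ x).1 - (φ x').1, (ψ y).1 - (ψ y').1⟫ = lam * ⟪x.1 - x'.1, y.1 - y'.1⟫ := by
  have e := theta_polarization (φ x) (φ x') (ψ y) (ψ y')
  rw [h x y, h x' y, h x y', h x' y'] at e
  linear_combination (lam * theta_polarization x x' y y' - e) / 2

theorem exists_affineEquiv_fst_eq (h : ∀ x y, Theta d (φ x) (ψ y) = lam * Theta d x y)
    (hψ : Function.Surjective ψ) (hlam : lam ≠ 0) :
    ∃ L : Eh d ≃ᵃ[ℝ] Eh d, ∀ x, (φ x).1 = L x.1 := by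
  set f : Eh d → Eh d := fun u => (φ (u, 0)).1
  have hspan : ∀ v, ∃ y, (ψ y).1 - (ψ 0).1 = v := fun v => by
    obtain ⟨y, hy⟩ := hψ (v + (ψ 0).1, 0)
    exact ⟨y, by simp [hy]⟩
  have hfst : ∀ x, (φ x).1 = f x.1 := fun x => by
    refine sub_eq_zero.mp (ext_inner_right ℝ fun v => ?_)
    obtain ⟨y, rfl⟩ := hspan v
    simpa using inner_fst_sub_eq h x (x.1, 0) y 0
  obtain ⟨M, hM⟩ := exists_linearMap_coe_eq_of_inner (g := fun u => f u - f 0) fun v => by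
    obtain ⟨y, rfl⟩ := hspan v
    exact ⟨lam • y.1, fun u => by
      simpa [real_inner_smul_right] using inner_fst_sub_eq h (u, 0) (0, 0) y 0⟩
  have hinj : Function.Injective M := (injective_iff_map_eq_zero M).mpr fun a ha => by
    have e := inner_fst_sub_eq h (a, 0) (0, 0) (a, 0) 0
    simp only [Prod.fst_zero, sub_zero] at e
    rw [show (φ (a, 0)).1 - (φ (0, 0)).1 = M a by simp [hM, f], ha, inner_zero_left,
      real_inner_self_eq_norm_sq] at e
    simpa [hlam] using e
  refine ⟨(LinearEquiv.ofInjectiveEndo M hinj).toAffineEquiv.trans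
    (AffineEquiv.constVAdd ℝ (Eh d) (f 0)), fun x => ?_⟩
  simp [hfst, hM]

theorem eq_normalForm (h : ∀ x y, Theta d (φ x) (ψ y) = lam * Theta d x y)
    {L : Eh d ≃ᵃ[ℝ] Eh d} (hL : ∀ x, (φ x).1 = L x.1) :
    φ = normalForm L lam ((2 : ℝ) • LinearMap.adjoint (L.linear : Eh d →ₗ[ℝ] Eh d) (L 0 - (ψ 0).1))
      (‖L 0 - (ψ 0).1‖ ^ 2 + (ψ 0).2) := by
  funext x
  refine Prod.ext (hL x) ?_
  have e := h x 0
  simp only [Theta, hL, L.apply_eq_linear_add x.1, Prod.fst_zero, Prod.snd_zero,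
    sub_zero] at e
  rw [add_sub_assoc, norm_add_sq_real] at e
  simp only [normalForm, triangular, quadraticPart_apply_self, real_inner_smul_right,
    LinearMap.adjoint_inner_right]
  linear_combination e

end Incidence

theorem exists_eq_normalForm_of_mem_Gd {φ : E d → E d} (h : φ ∈ Gd d) :
    ∃ (L : Eh d ≃ᵃ[ℝ] Eh d) (α : ℝ) (w : Eh d) (c : ℝ), α ≠ 0 ∧ φ = normalForm L α w c := by
  obtain ⟨ψ, -, hψ, lam, hlam, hΘ⟩ := h
  obtain ⟨L, hL⟩ := exists_affineEquiv_fst_eq hΘ hψ.surjective hlam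
  exact ⟨L, lam, _, _, hlam, eq_normalForm hΘ hL⟩

theorem contDiff_quadraticPart_apply_self (L : Eh d ≃ᵃ[ℝ] Eh d) (α : ℝ) :
    ContDiff ℝ (⊤ : ℕ∞) fun u => quadraticPart L α u u := by
  have hA : ContDiff ℝ (⊤ : ℕ∞) L.linear := by
    simpa using (LinearMap.toContinuousLinearMap (L.linear : Eh d →ₗ[ℝ] Eh d)).contDiff
  simp only [quadraticPart_apply_self]
  exact (hA.norm_sq ℝ).sub (contDiff_const.mul (contDiff_id.norm_sq ℝ))

theorem normalForm_mem_Gd (L : Eh d ≃ᵃ[ℝ] Eh d) {α : ℝ} (hα : α ≠ 0) (w : Eh d) (c : ℝ) :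
    normalForm L α w c ∈ Gd d := by
  set S := contragredient L.linear
  set H : Eh d ≃ᵃ[ℝ] Eh d := (S.trans (LinearEquiv.smulOfNeZero ℝ _ α hα)).toAffineEquiv.trans
    (AffineEquiv.constVAdd ℝ (Eh d) (L 0 - (2⁻¹ : ℝ) • S w))
  have hH : ∀ z, H z - L 0 = α • S z - (2⁻¹ : ℝ) • S w := fun z => by
    simp only [H, AffineEquiv.trans_apply, AffineEquiv.constVAdd_apply, vadd_eq_add,
      LinearEquiv.coe_toAffineEquiv, LinearEquiv.trans_apply, LinearEquiv.smulOfNeZero_apply]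
    abel
  -- the cross term of `‖L x' - H y'‖ ^ 2` cancels the `x'`-dependence of
  -- `Θ(φ x, ψ y) - α Θ(x, y)`; the last coordinate of `ψ` absorbs the rest
  refine ⟨triangular H α fun z => α * ‖z‖ ^ 2 + c - ‖H z - L 0‖ ^ 2,
    isSmoothDiffeo_triangular L hα (G := fun u => quadraticPart L α u u + ⟪u, w⟫ + c) ?_,
    isSmoothDiffeo_triangular H hα (G := fun z => α * ‖z‖ ^ 2 + c - ‖H z - L 0‖ ^ 2) ?_, α, hα,
    fun x y => ?_⟩
  · exact ((contDiff_quadraticPart_apply_self L α).add (contDiff_id.inner ℝ contDiff_const)).add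
      contDiff_const
  · have hH' : ContDiff ℝ (⊤ : ℕ∞) H := H.toAffineMap.contDiff_of_finiteDimensional
    exact ((contDiff_const.mul (contDiff_id.norm_sq ℝ)).add contDiff_const).sub
      ((hH'.sub contDiff_const).norm_sq ℝ)
  have hdiff : L x.1 - H y.1 = L.linear x.1 - (H y.1 - L 0) := by
    rw [L.apply_eq_linear_add x.1]
    abel
  have hcross : ⟪L.linear x.1, H y.1 - L 0⟫ = α * ⟪x.1, y.1⟫ - 2⁻¹ * ⟪x.1, w⟫ := by
    rw [hH, inner_sub_right, real_inner_smul_right, real_inner_smul_right,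
      inner_apply_contragredient, inner_apply_contragredient]
  simp only [Theta, normalForm, triangular, quadraticPart_apply_self, hdiff,
    norm_sub_sq_real (L.linear x.1), hcross, norm_sub_sq_real x.1]
  ring

theorem apply_self_eq_quadraticPart_of_mem_Gd (L : Eh d ≃ᵃ[ℝ] Eh d) {α β : ℝ}
    (B : Eh d →ₗ[ℝ] Eh d →ₗ[ℝ] ℝ) (h : triangular L α (fun u => β + B u u) ∈ Gd d) (u : Eh d) :
    B u u = quadraticPart L α u u := by
  obtain ⟨L', α', w, c, -, heq⟩ := exists_eq_normalForm_of_mem_Gd h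
  obtain ⟨rfl, rfl, hG⟩ := triangular_injective heq
  have hB := (B - quadraticPart L α).apply_self_eq_zero_of_eq_affine (w := w) (c := c - β)
    (fun v => by
      have := congrFun hG v
      simp only [LinearMap.sub_apply]
      linarith) u
  rwa [LinearMap.sub_apply, LinearMap.sub_apply, sub_eq_zero] at hB

theorem symmetry_group_structure_general (d : ℕ) :
    (∀ Φ ∈ Gdd d, Φ.1 ∈ Gd d) ∧
    (∀ φ ∈ Gd d, ∃! ψ : E d → E d, (φ, ψ) ∈ Gdd d) ∧
    (∀ Φ ∈ Gdd d, (fun x : E d => -Φ.2 (-x)) ∈ Gd d) ∧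
    (∀ φ ∈ Gd d, ∃ (L : Eh d ≃ᵃ[ℝ] Eh d) (α β : ℝ), α ≠ 0 ∧
      ∃ (q : Eh d → ℝ) (Bq : Eh d →ₗ[ℝ] Eh d →ₗ[ℝ] ℝ) (w : Eh d) (c : ℝ),
        (∀ v, q v = Bq v v) ∧
        φ = fun x : E d => (L x.1, α * x.2 + β + q x.1 + ⟪x.1, w⟫ + c)) ∧
    (∀ (L : Eh d ≃ᵃ[ℝ] Eh d) (α β : ℝ), α ≠ 0 →
      ∃! q : Eh d → ℝ, (∃ Bq : Eh d →ₗ[ℝ] Eh d →ₗ[ℝ] ℝ, ∀ v, q v = Bq v v) ∧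
        ∀ (w : Eh d) (c : ℝ),
          (fun x : E d => (L x.1, α * x.2 + β + q x.1 + ⟪x.1, w⟫ + c)) ∈ Gd d) := by
  refine ⟨fun Φ hΦ => ⟨Φ.2, hΦ⟩, ?_, fun Φ hΦ => ⟨_, Gdd.swap_conj_neg hΦ⟩, ?_, ?_⟩
  · rintro φ ⟨ψ, hψ⟩
    refine ⟨ψ, hψ, fun ψ' ⟨hφ, _, lam', hlam', hΘ'⟩ => ?_⟩
    obtain ⟨-, -, lam, -, hΘ⟩ := hψ
    exact eq_of_theta_comp_eq hφ.surjective hlam' hΘ' hΘ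
  · intro φ hφ
    obtain ⟨L, α, w, c, hα, rfl⟩ := exists_eq_normalForm_of_mem_Gd hφ
    refine ⟨L, α, 0, hα, _, quadraticPart L α, w, c, fun _ => rfl, funext fun x => ?_⟩
    simp only [normalForm, triangular, add_zero]
    ring_nf
  · intro L α β hα
    refine ⟨fun u => quadraticPart L α u u, ⟨⟨_, fun _ => rfl⟩, fun w c => ?_⟩, ?_⟩
    · convert normalForm_mem_Gd L hα w (β + c) using 1
      funext x
      simp only [normalForm, triangular]
      ring_nf
    · rintro q ⟨⟨B, hB⟩, hmem⟩
      funext u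
      rw [hB]
      refine apply_self_eq_quadraticPart_of_mem_Gd L (β := β) B ?_ u
      convert hmem 0 0 using 1
      funext x
      simp only [triangular, hB, inner_zero_right, add_zero]
      ring_nf

/-- Structure of the symmetry groups: (i) `(φ,ψ) ↦ φ` is a bijection of `𝒢_{d,d}` with `𝒢_d`;
(ii) if `(φ,ψ) ∈ 𝒢_{d,d}` then `τ∘ψ∘τ ∈ 𝒢_d`; (iii) every `φ ∈ 𝒢_d` has the form
`(x',x_d) ↦ (L x', A x_d + Q(x'))` with `L` an invertible affine endomorphism of `ℝ^{d-1}`,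
`A` an invertible affine endomorphism of `ℝ`, and `Q` a polynomial of degree at most `2`,
whose homogeneous quadratic part is uniquely determined by `(L,A)` while its affine part
is arbitrary. -/
theorem symmetry_group_structure (d : ℕ) (hd : 2 ≤ d) :
    (∀ Φ ∈ Gdd d, Φ.1 ∈ Gd d) ∧
    (∀ φ ∈ Gd d, ∃! ψ : E d → E d, (φ, ψ) ∈ Gdd d) ∧
    (∀ Φ ∈ Gdd d, (fun x : E d => -Φ.2 (-x)) ∈ Gd d) ∧
    (∀ φ ∈ Gd d, ∃ (L : Eh d ≃ᵃ[ℝ] Eh d) (α β : ℝ), α ≠ 0 ∧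
      ∃ (q : Eh d → ℝ) (Bq : Eh d →ₗ[ℝ] Eh d →ₗ[ℝ] ℝ) (w : Eh d) (c : ℝ),
        (∀ v, q v = Bq v v) ∧
        φ = fun x : E d => (L x.1, α * x.2 + β + q x.1 + ⟪x.1, w⟫ + c)) ∧
    (∀ (L : Eh d ≃ᵃ[ℝ] Eh d) (α β : ℝ), α ≠ 0 →
      ∃! q : Eh d → ℝ, (∃ Bq : Eh d →ₗ[ℝ] Eh d →ₗ[ℝ] ℝ, ∀ v, q v = Bq v v) ∧
        ∀ (w : Eh d) (c : ℝ),
          (fun x : E d => (L x.1, α * x.2 + β + q x.1 + ⟪x.1, w⟫ + c)) ∈ Gd d) :=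
  symmetry_group_structure_general d

end RadonParaboloid
end
end

section
/- There exists a constant C < ∞, depending only on the dimension d, such that for any three paraballs B♯, B♮, B♭, the quasi-triangle inequality ϱ(B♯,B♭) ≤ C ϱ(B♯,B♮)^C + C ϱ(B♮,B♭)^C holds. -/
open MeasureTheory Filter Set
open scoped ENNReal RealInnerProductSpace

noncomputable section

namespace RadonParaboloid

/-!
Write `Q_B(v) = Σ ⟪v, e_j⟫² / r_j² = ‖D_B v‖²`, where `D_B` is diagonal in the basis `e` with
entries `r_j⁻¹`; `𝒞` is the unit ball of `Q_B`, and the starred terms of `ϱ` are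
`‖D_B⁻¹ v‖² / ρ²`. Since `Q_B` is quadratic, the `sup` terms of `ϱ` are the best constants `s`
with `Q_♭ ≤ s Q_♯`; they are submultiplicative, and by duality the same constants compare
`‖D_♯⁻¹ v‖²` with `‖D_♭⁻¹ v‖²`. The horizontal terms then follow from
`Q(x - z) ≤ 2 Q(x - y) + 2 Q(y - z)`. For the vertical terms, `Θ` is additive along a chain up
to cross terms of the size of the squared horizontal steps. These are bounded by
`(ρ♯ + ρ♭) ϱ(B♯, B♭)`, because the `Θ`'s around the cycle `x̄♭, x̄♯⋆, x̄♯, x̄♭⋆`, two of which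
vanish by incidence, add up to minus the squared horizontal lengths of its edges.
Apart from the radius ratio, `ϱ` is the sum of two halves exchanged by swapping the paraballs,
so only one half needs bounding. Every bound is polynomial in
`t = max (ϱ(B♯,B♮), ϱ(B♮,B♭)) ≥ 1`, and in the end `ϱ(B♯,B♭) ≤ 39 t⁴`.
-/

open Topology

section DiagonalMap

variable {ι E : Type*} [Fintype ι] [NormedAddCommGroup E] [InnerProductSpace ℝ E]

def diagMap (e : OrthonormalBasis ι ℝ E) (w : ι → ℝ) : E →ₗ[ℝ] E where
  toFun v := ∑ j, (w j * ⟪v, e j⟫) • e j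
  map_add' u v := by simp only [inner_add_left, mul_add, add_smul, Finset.sum_add_distrib]
  map_smul' c v := by
    simp only [real_inner_smul_left, Finset.smul_sum, smul_smul, RingHom.id_apply]
    exact Finset.sum_congr rfl fun j _ => by ring_nf

variable (e : OrthonormalBasis ι ℝ E) (w w' : ι → ℝ)

lemma diagMap_apply (v : E) : diagMap e w v = ∑ j, (w j * ⟪v, e j⟫) • e j := rfl

lemma inner_diagMap_basis (v : E) (k : ι) : ⟪diagMap e w v, e k⟫ = w k * ⟪v, e k⟫ := by
  classical
  simp [diagMap_apply, sum_inner, real_inner_smul_left, e.inner_eq_ite]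

lemma diagMap_diagMap (v : E) : diagMap e w (diagMap e w' v) = diagMap e (w * w') v := by
  rw [diagMap_apply e w, diagMap_apply e (w * w')]
  simp only [inner_diagMap_basis, Pi.mul_apply, mul_assoc]

lemma diagMap_one (v : E) : diagMap e 1 v = v := by
  simpa [diagMap_apply, real_inner_comm] using e.sum_repr' v

variable {w} in
lemma diagMap_inv_diagMap (hw : ∀ j, w j ≠ 0) (v : E) : diagMap e w⁻¹ (diagMap e w v) = v := by
  rw [diagMap_diagMap, show w⁻¹ * w = 1 from funext fun j => inv_mul_cancel₀ (hw j), diagMap_one]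

variable {w} in
lemma diagMap_diagMap_inv (hw : ∀ j, w j ≠ 0) (v : E) : diagMap e w (diagMap e w⁻¹ v) = v := by
  rw [diagMap_diagMap, show w * w⁻¹ = 1 from funext fun j => mul_inv_cancel₀ (hw j), diagMap_one]

lemma diagMap_isSymmetric : (diagMap e w).IsSymmetric := fun u v => by
  simp only [diagMap_apply, sum_inner, inner_sum, real_inner_smul_left, real_inner_smul_right]
  exact Finset.sum_congr rfl fun j _ => by rw [real_inner_comm v (e j)]; ring

lemma norm_diagMap_sq (v : E) : ‖diagMap e w v‖ ^ 2 = ∑ j, (w j * ⟪v, e j⟫) ^ 2 := by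
  rw [← e.sum_sq_norm_inner_right]
  congr! 1 with j
  rw [real_inner_comm, inner_diagMap_basis, Real.norm_eq_abs, sq_abs]

lemma norm_diagMap_sq_le (v : E) : ‖diagMap e w v‖ ^ 2 ≤ (∑ j, w j ^ 2) * ‖v‖ ^ 2 := by
  rw [norm_diagMap_sq, Finset.sum_mul]
  refine Finset.sum_le_sum fun j _ => ?_
  rw [mul_pow]
  refine mul_le_mul_of_nonneg_left ?_ (sq_nonneg _)
  simpa [sq] using real_inner_mul_inner_self_le v (e j)

end DiagonalMap

lemma norm_sq_le_of_isSymmetric_inverse {E : Type*} [NormedAddCommGroup E]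
    [InnerProductSpace ℝ E] {A B A' B' : E →ₗ[ℝ] E} (hA' : A'.IsSymmetric) (hB : B.IsSymmetric)
    (hAA' : ∀ v, A (A' v) = v) (hBB' : ∀ v, B (B' v) = v) {s : ℝ} (hs : 0 ≤ s)
    (h : ∀ x, ‖B x‖ ^ 2 ≤ s * ‖A x‖ ^ 2) (v : E) :
    ‖A' v‖ ^ 2 ≤ s * ‖B' v‖ ^ 2 := by
  set y := A' v
  have hy : ‖y‖ ^ 2 ≤ ‖B' v‖ * ‖B (A' y)‖ :=
    calc ‖y‖ ^ 2 = ⟪B (B' v), A' y⟫ := by rw [hBB', ← hA', real_inner_self_eq_norm_sq]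
      _ = ⟪B' v, B (A' y)⟫ := hB _ _
      _ ≤ ‖B' v‖ * ‖B (A' y)‖ := real_inner_le_norm _ _
  have hBy : ‖B (A' y)‖ ^ 2 ≤ s * ‖y‖ ^ 2 := by simpa only [hAA'] using h (A' y)
  rcases (norm_nonneg y).eq_or_lt with hy0 | hy0
  · rw [← hy0]; simpa using mul_nonneg hs (sq_nonneg ‖B' v‖)
  · have : ‖y‖ ^ 2 * ‖y‖ ^ 2 ≤ ‖y‖ ^ 2 * (s * ‖B' v‖ ^ 2) :=
      calc ‖y‖ ^ 2 * ‖y‖ ^ 2 ≤ (‖B' v‖ * ‖B (A' y)‖) * (‖B' v‖ * ‖B (A' y)‖) :=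
            mul_self_le_mul_self (by positivity) hy
        _ = ‖B' v‖ ^ 2 * ‖B (A' y)‖ ^ 2 := by ring
        _ ≤ ‖B' v‖ ^ 2 * (s * ‖y‖ ^ 2) := by gcongr
        _ = ‖y‖ ^ 2 * (s * ‖B' v‖ ^ 2) := by ring
    exact le_of_mul_le_mul_left this (by positivity)

lemma le_mul_of_forall_lt_one {V : Type*} [AddCommGroup V] [Module ℝ V] {f g : V → ℝ}
    (hf : ∀ (c : ℝ) v, f (c • v) = c ^ 2 * f v) (hg : ∀ (c : ℝ) v, g (c • v) = c ^ 2 * g v)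
    (hf0 : ∀ v, 0 ≤ f v) {S : ℝ} (hS : ∀ v, f v < 1 → g v ≤ S) (v : V) :
    g v ≤ S * f v := by
  have key : ∀ c ∈ Set.Ioi (f v), g v ≤ S * c := by
    intro c hc
    have hc0 : 0 < c := (hf0 v).trans_lt hc
    have hscale : ((√c)⁻¹) ^ 2 = c⁻¹ := by rw [inv_pow, Real.sq_sqrt hc0.le]
    have := hS ((√c)⁻¹ • v) (by rwa [hf, hscale, inv_mul_lt_one₀ hc0])
    rwa [hg, hscale, inv_mul_le_iff₀ hc0, mul_comm] at this
  refine ge_of_tendsto (x := 𝓝[>] f v) ?_ (eventually_nhdsWithin_of_forall key)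
  exact ((continuous_const_mul S).tendsto (f v)).mono_left nhdsWithin_le_nhds

lemma norm_map_sub_sq_le {E : Type*} [NormedAddCommGroup E] [Module ℝ E] (A : E →ₗ[ℝ] E)
    (x y z : E) : ‖A (x - z)‖ ^ 2 ≤ 2 * ‖A (x - y)‖ ^ 2 + 2 * ‖A (y - z)‖ ^ 2 := by
  have hsplit : A (x - z) = A (x - y) + A (y - z) := by rw [← map_add, sub_add_sub_cancel]
  calc ‖A (x - z)‖ ^ 2 ≤ (‖A (x - y)‖ + ‖A (y - z)‖) ^ 2 := by
        rw [hsplit]; exact pow_le_pow_left₀ (norm_nonneg _) (norm_add_le _ _) 2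
    _ ≤ 2 * ‖A (x - y)‖ ^ 2 + 2 * ‖A (y - z)‖ ^ 2 := by
        linarith [add_sq_le (a := ‖A (x - y)‖) (b := ‖A (y - z)‖)]

lemma one_le_max_div_min {x y : ℝ} (hx : 0 < x) (hy : 0 < y) : 1 ≤ max x y / min x y :=
  (one_le_div (lt_min hx hy)).mpr min_le_max

lemma le_max_div_min_mul {x y : ℝ} (hx : 0 < x) (hy : 0 < y) : y ≤ max x y / min x y * x :=
  calc y ≤ max x y := le_max_right x y
    _ = max x y / min x y * min x y := (div_mul_cancel₀ _ (lt_min hx hy).ne').symm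
    _ ≤ max x y / min x y * x := by gcongr; exact min_le_left x y

lemma max_div_min_le {x y c : ℝ} (hx : 0 < x) (hy : 0 < y) (hxy : x ≤ c * y) (hyx : y ≤ c * x) :
    max x y / min x y ≤ c := by
  rcases le_total x y with h | h
  · rwa [max_eq_right h, min_eq_left h, div_le_iff₀ hx]
  · rwa [max_eq_left h, min_eq_right h, div_le_iff₀ hy]

section Theta

variable {d : ℕ}

lemma Theta_cycle (x y z w : E d) :
    Theta d x y + Theta d y z + Theta d z w + Theta d w x =
      -(‖x.1 - y.1‖ ^ 2 + ‖y.1 - z.1‖ ^ 2 + ‖z.1 - w.1‖ ^ 2 + ‖w.1 - x.1‖ ^ 2) := by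
  unfold Theta; ring

lemma abs_Theta_le (x y z w : E d) :
    |Theta d x w| ≤ |Theta d x y| + |Theta d y z| + |Theta d z w| +
      2 * (‖x.1 - y.1‖ ^ 2 + ‖y.1 - z.1‖ ^ 2 + ‖z.1 - w.1‖ ^ 2) := by
  set a := x.1 - y.1
  set b := y.1 - z.1
  set c := z.1 - w.1
  have hsum : x.1 - w.1 = a + b + c := by simp only [a, b, c]; abel
  have hsplit : Theta d x w = Theta d x y + Theta d y z + Theta d z w +
      (‖a‖ ^ 2 + ‖b‖ ^ 2 + ‖c‖ ^ 2 - ‖a + b + c‖ ^ 2) := by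
    unfold Theta; rw [hsum]; ring
  have habc : ‖a + b + c‖ ^ 2 ≤ 3 * (‖a‖ ^ 2 + ‖b‖ ^ 2 + ‖c‖ ^ 2) := by
    have := norm_add₃_le (a := a) (b := b) (c := c)
    nlinarith [norm_nonneg (a + b + c), sq_nonneg (‖a‖ - ‖b‖), sq_nonneg (‖b‖ - ‖c‖),
      sq_nonneg (‖a‖ - ‖c‖)]
  have hcross : |‖a‖ ^ 2 + ‖b‖ ^ 2 + ‖c‖ ^ 2 - ‖a + b + c‖ ^ 2| ≤
      2 * (‖a‖ ^ 2 + ‖b‖ ^ 2 + ‖c‖ ^ 2) := by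
    have : 0 ≤ ‖a + b + c‖ ^ 2 := by positivity
    have : 0 ≤ ‖a‖ ^ 2 + ‖b‖ ^ 2 + ‖c‖ ^ 2 := by positivity
    exact abs_le.mpr ⟨by linarith, by linarith⟩
  rw [hsplit]
  refine (abs_add_le _ _).trans ?_
  linarith [abs_add_three (Theta d x y) (Theta d y z) (Theta d z w)]

end Theta

namespace Paraball

variable {d : ℕ}

def gaugeSq (B : Paraball d) (v : Eh d) : ℝ := ∑ j, ⟪v, B.e j⟫ ^ 2 / B.r j ^ 2

def starGaugeSq (B : Paraball d) (v : Eh d) : ℝ := ∑ j, ⟪v, B.e j⟫ ^ 2 / (B.rad / B.r j) ^ 2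

def distortion (B1 B2 : Paraball d) : ℝ := sSup (B2.gaugeSq '' B1.cbody)

lemma mem_cbody {B : Paraball d} {v : Eh d} : v ∈ B.cbody ↔ B.gaugeSq v < 1 := Iff.rfl

lemma gaugeSq_eq_norm_sq (B : Paraball d) (v : Eh d) :
    B.gaugeSq v = ‖diagMap B.e B.r⁻¹ v‖ ^ 2 := by
  rw [norm_diagMap_sq]
  exact Finset.sum_congr rfl fun j _ => by rw [Pi.inv_apply, mul_pow, inv_pow, div_eq_inv_mul]

lemma starGaugeSq_eq_norm_sq_div (B : Paraball d) (v : Eh d) :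
    B.starGaugeSq v = ‖diagMap B.e B.r v‖ ^ 2 / B.rad ^ 2 := by
  rw [norm_diagMap_sq, Finset.sum_div]
  refine Finset.sum_congr rfl fun j _ => ?_
  have := (B.hr j).ne'
  have := B.hrad.ne'
  field_simp

lemma gaugeSq_nonneg (B : Paraball d) (v : Eh d) : 0 ≤ B.gaugeSq v := by
  rw [gaugeSq_eq_norm_sq]; positivity

lemma starGaugeSq_nonneg (B : Paraball d) (v : Eh d) : 0 ≤ B.starGaugeSq v := by
  rw [starGaugeSq_eq_norm_sq_div]; positivity

lemma gaugeSq_smul (B : Paraball d) (c : ℝ) (v : Eh d) :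
    B.gaugeSq (c • v) = c ^ 2 * B.gaugeSq v := by
  rw [gaugeSq_eq_norm_sq, gaugeSq_eq_norm_sq, map_smul, norm_smul, mul_pow, Real.norm_eq_abs,
    sq_abs]

lemma gaugeSq_sub_comm (B : Paraball d) (x y : Eh d) :
    B.gaugeSq (x - y) = B.gaugeSq (y - x) := by
  rw [gaugeSq_eq_norm_sq, gaugeSq_eq_norm_sq, ← neg_sub, map_neg, norm_neg]

lemma starGaugeSq_sub_comm (B : Paraball d) (x y : Eh d) :
    B.starGaugeSq (x - y) = B.starGaugeSq (y - x) := by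
  rw [starGaugeSq_eq_norm_sq_div, starGaugeSq_eq_norm_sq_div, ← neg_sub, map_neg, norm_neg]

lemma gaugeSq_sub_le (B : Paraball d) (x y z : Eh d) :
    B.gaugeSq (x - z) ≤ 2 * B.gaugeSq (x - y) + 2 * B.gaugeSq (y - z) := by
  simpa only [gaugeSq_eq_norm_sq] using norm_map_sub_sq_le (diagMap B.e B.r⁻¹) x y z

lemma starGaugeSq_sub_le (B : Paraball d) (x y z : Eh d) :
    B.starGaugeSq (x - z) ≤ 2 * B.starGaugeSq (x - y) + 2 * B.starGaugeSq (y - z) := by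
  simp only [starGaugeSq_eq_norm_sq_div]
  have := norm_map_sub_sq_le (diagMap B.e B.r) x y z
  rw [mul_div_assoc', mul_div_assoc', ← add_div]
  gcongr

lemma bddAbove_gaugeSq_image (B1 B2 : Paraball d) : BddAbove (B2.gaugeSq '' B1.cbody) := by
  refine ⟨(∑ j, (B2.r⁻¹) j ^ 2) * (∑ j, B1.r j ^ 2), ?_⟩
  rintro _ ⟨v, hv, rfl⟩
  have hv' : ‖v‖ ^ 2 ≤ ∑ j, B1.r j ^ 2 :=
    calc ‖v‖ ^ 2 = ‖diagMap B1.e B1.r (diagMap B1.e B1.r⁻¹ v)‖ ^ 2 := by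
          rw [diagMap_diagMap_inv _ fun j => (B1.hr j).ne']
      _ ≤ (∑ j, B1.r j ^ 2) * B1.gaugeSq v := by
          rw [gaugeSq_eq_norm_sq]; exact norm_diagMap_sq_le _ _ _
      _ ≤ ∑ j, B1.r j ^ 2 :=
          mul_le_of_le_one_right (Finset.sum_nonneg fun j _ => sq_nonneg _) (mem_cbody.mp hv).le
  calc B2.gaugeSq v ≤ (∑ j, (B2.r⁻¹) j ^ 2) * ‖v‖ ^ 2 := by
        rw [gaugeSq_eq_norm_sq]; exact norm_diagMap_sq_le _ _ _
    _ ≤ _ := by gcongr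

lemma gaugeSq_le_distortion (B1 B2 : Paraball d) {v : Eh d} (hv : v ∈ B1.cbody) :
    B2.gaugeSq v ≤ B1.distortion B2 :=
  le_csSup (bddAbove_gaugeSq_image B1 B2) ⟨v, hv, rfl⟩

lemma distortion_nonneg (B1 B2 : Paraball d) : 0 ≤ B1.distortion B2 :=
  (B2.gaugeSq_nonneg 0).trans (gaugeSq_le_distortion B1 B2 (by simp [mem_cbody, gaugeSq]))

lemma gaugeSq_le_distortion_mul (B1 B2 : Paraball d) (v : Eh d) :
    B2.gaugeSq v ≤ B1.distortion B2 * B1.gaugeSq v :=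
  le_mul_of_forall_lt_one B1.gaugeSq_smul B2.gaugeSq_smul B1.gaugeSq_nonneg
    (fun _ hv => gaugeSq_le_distortion B1 B2 hv) v

lemma distortion_le_mul (B1 B2 B3 : Paraball d) :
    B1.distortion B3 ≤ B1.distortion B2 * B2.distortion B3 := by
  refine csSup_le ⟨_, 0, by simp [mem_cbody, gaugeSq], rfl⟩ ?_
  rintro _ ⟨v, hv, rfl⟩
  calc B3.gaugeSq v ≤ B2.distortion B3 * (B1.distortion B2 * B1.gaugeSq v) := by
        refine (gaugeSq_le_distortion_mul B2 B3 v).trans ?_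
        gcongr
        · exact distortion_nonneg B2 B3
        · exact gaugeSq_le_distortion_mul B1 B2 v
    _ ≤ B2.distortion B3 * (B1.distortion B2 * 1) := by
        have := distortion_nonneg B1 B2
        have := distortion_nonneg B2 B3
        gcongr
        exact (mem_cbody.mp hv).le
    _ = B1.distortion B2 * B2.distortion B3 := by ring

lemma starGaugeSq_le_distortion_mul (B1 B2 : Paraball d) (v : Eh d) :
    B1.starGaugeSq v ≤ B1.distortion B2 * (B2.rad / B1.rad) ^ 2 * B2.starGaugeSq v := by
  have hdual := norm_sq_le_of_isSymmetric_inverse (diagMap_isSymmetric B1.e B1.r)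
    (diagMap_isSymmetric B2.e B2.r⁻¹) (diagMap_inv_diagMap B1.e fun j => (B1.hr j).ne')
    (diagMap_inv_diagMap B2.e fun j => (B2.hr j).ne') (distortion_nonneg B1 B2)
    (fun x => by simpa only [gaugeSq_eq_norm_sq] using gaugeSq_le_distortion_mul B1 B2 x) v
  rw [starGaugeSq_eq_norm_sq_div, starGaugeSq_eq_norm_sq_div]
  calc ‖diagMap B1.e B1.r v‖ ^ 2 / B1.rad ^ 2
      ≤ B1.distortion B2 * ‖diagMap B2.e B2.r v‖ ^ 2 / B1.rad ^ 2 := by gcongr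
    _ = _ := by
      have := B1.hrad.ne'
      have := B2.hrad.ne'
      field_simp

end Paraball

section Varrho

variable {d : ℕ}

def varrhoHalf (B1 B2 : Paraball d) : ℝ :=
  B1.distortion B2 + B1.gaugeSq (B1.xb.1 - B2.xb.1) + B1.starGaugeSq (B1.xs.1 - B2.xs.1)
    + |Theta d B2.xb B1.xs| / B1.rad

lemma varrho_eq_add_varrhoHalf (B1 B2 : Paraball d) :
    varrho B1 B2 =
      max B1.rad B2.rad / min B1.rad B2.rad + varrhoHalf B1 B2 + varrhoHalf B2 B1 := by
  have hsum : varrho B1 B2 = max B1.rad B2.rad / min B1.rad B2.rad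
      + B1.distortion B2 + B2.distortion B1
      + B1.gaugeSq (B1.xb.1 - B2.xb.1) + B2.gaugeSq (B1.xb.1 - B2.xb.1)
      + B1.starGaugeSq (B1.xs.1 - B2.xs.1) + B2.starGaugeSq (B1.xs.1 - B2.xs.1)
      + |Theta d B2.xb B1.xs| / B1.rad + |Theta d B1.xb B2.xs| / B2.rad := rfl
  rw [hsum, varrhoHalf, varrhoHalf, B2.gaugeSq_sub_comm B1.xb.1, B2.starGaugeSq_sub_comm B1.xs.1]
  ring

lemma varrho_comm (B1 B2 : Paraball d) : varrho B1 B2 = varrho B2 B1 := by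
  rw [varrho_eq_add_varrhoHalf, varrho_eq_add_varrhoHalf, max_comm, min_comm]
  ring

lemma varrhoHalf_nonneg (B1 B2 : Paraball d) : 0 ≤ varrhoHalf B1 B2 := by
  have := B1.distortion_nonneg B2
  have := B1.gaugeSq_nonneg (B1.xb.1 - B2.xb.1)
  have := B1.starGaugeSq_nonneg (B1.xs.1 - B2.xs.1)
  have : 0 ≤ |Theta d B2.xb B1.xs| / B1.rad := div_nonneg (abs_nonneg _) B1.hrad.le
  unfold varrhoHalf
  linarith

lemma max_div_min_rad_le_varrho (B1 B2 : Paraball d) :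
    max B1.rad B2.rad / min B1.rad B2.rad ≤ varrho B1 B2 := by
  rw [varrho_eq_add_varrhoHalf]
  linarith [varrhoHalf_nonneg B1 B2, varrhoHalf_nonneg B2 B1]

lemma one_le_varrho (B1 B2 : Paraball d) : 1 ≤ varrho B1 B2 :=
  (one_le_max_div_min B1.hrad B2.hrad).trans (max_div_min_rad_le_varrho B1 B2)

lemma one_le_of_varrho_le {B1 B2 : Paraball d} {t : ℝ} (h : varrho B1 B2 ≤ t) : 1 ≤ t :=
  (one_le_varrho B1 B2).trans h

lemma rad_le_of_varrho_le {B1 B2 : Paraball d} {t : ℝ} (h : varrho B1 B2 ≤ t) :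
    B2.rad ≤ t * B1.rad :=
  (le_max_div_min_mul B1.hrad B2.hrad).trans
    (mul_le_mul_of_nonneg_right ((max_div_min_rad_le_varrho B1 B2).trans h) B1.hrad.le)

lemma terms_le_of_varrho_le {B1 B2 : Paraball d} {t : ℝ} (h : varrho B1 B2 ≤ t) :
    B1.distortion B2 ≤ t ∧ B1.gaugeSq (B1.xb.1 - B2.xb.1) ≤ t ∧
      B1.starGaugeSq (B1.xs.1 - B2.xs.1) ≤ t ∧ |Theta d B2.xb B1.xs| ≤ t * B1.rad := by
  have hhalf : varrhoHalf B1 B2 ≤ t := by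
    rw [varrho_eq_add_varrhoHalf] at h
    linarith [varrhoHalf_nonneg B2 B1, one_le_max_div_min B1.hrad B2.hrad]
  have := B1.distortion_nonneg B2
  have := B1.gaugeSq_nonneg (B1.xb.1 - B2.xb.1)
  have := B1.starGaugeSq_nonneg (B1.xs.1 - B2.xs.1)
  have : 0 ≤ |Theta d B2.xb B1.xs| / B1.rad := div_nonneg (abs_nonneg _) B1.hrad.le
  unfold varrhoHalf at hhalf
  refine ⟨by linarith, by linarith, by linarith, ?_⟩
  rw [← div_le_iff₀ B1.hrad]
  linarith

lemma Theta_xs_xb (B : Paraball d) : Theta d B.xs B.xb = 0 := sub_eq_zero.mpr B.incid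

lemma norm_sq_add_norm_sq_le_of_varrho_le {B1 B2 : Paraball d} {t : ℝ} (h : varrho B1 B2 ≤ t) :
    ‖B2.xb.1 - B1.xs.1‖ ^ 2 + ‖B1.xs.1 - B1.xb.1‖ ^ 2 ≤ (B1.rad + B2.rad) * t := by
  have hcycle := Theta_cycle B2.xb B1.xs B1.xb B2.xs
  rw [Theta_xs_xb, Theta_xs_xb] at hcycle
  obtain ⟨-, -, -, h21⟩ := terms_le_of_varrho_le h
  obtain ⟨-, -, -, h12⟩ := terms_le_of_varrho_le (varrho_comm B1 B2 ▸ h)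
  linarith [neg_abs_le (Theta d B2.xb B1.xs), neg_abs_le (Theta d B1.xb B2.xs),
    sq_nonneg ‖B1.xb.1 - B2.xs.1‖, sq_nonneg ‖B2.xs.1 - B2.xb.1‖]

end Varrho

section QuasiTriangle

variable {d : ℕ} {B1 B2 B3 : Paraball d} {t : ℝ}

lemma distortion_le_of_varrho_le (h12 : varrho B1 B2 ≤ t) (h23 : varrho B2 B3 ≤ t) :
    B1.distortion B3 ≤ t ^ 2 := by
  obtain ⟨hs12, -⟩ := terms_le_of_varrho_le h12
  obtain ⟨hs23, -⟩ := terms_le_of_varrho_le h23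
  calc B1.distortion B3 ≤ B1.distortion B2 * B2.distortion B3 := B1.distortion_le_mul B2 B3
    _ ≤ t * t :=
        mul_le_mul hs12 hs23 (B2.distortion_nonneg B3) (zero_le_one.trans (one_le_of_varrho_le h12))
    _ = t ^ 2 := (sq t).symm

lemma gaugeSq_le_of_varrho_le (h12 : varrho B1 B2 ≤ t) (h23 : varrho B2 B3 ≤ t) :
    B1.gaugeSq (B1.xb.1 - B3.xb.1) ≤ 2 * t + 2 * t ^ 2 := by
  obtain ⟨-, hq12, -⟩ := terms_le_of_varrho_le h12
  obtain ⟨hs21, -⟩ := terms_le_of_varrho_le (varrho_comm B1 B2 ▸ h12)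
  obtain ⟨-, hq23, -⟩ := terms_le_of_varrho_le h23
  have hcomp : B1.gaugeSq (B2.xb.1 - B3.xb.1) ≤ t ^ 2 :=
    calc B1.gaugeSq (B2.xb.1 - B3.xb.1)
        ≤ B2.distortion B1 * B2.gaugeSq (B2.xb.1 - B3.xb.1) := B2.gaugeSq_le_distortion_mul B1 _
      _ ≤ t * t :=
          mul_le_mul hs21 hq23 (B2.gaugeSq_nonneg _) (zero_le_one.trans (one_le_of_varrho_le h12))
      _ = t ^ 2 := (sq t).symm
  linarith [B1.gaugeSq_sub_le B1.xb.1 B2.xb.1 B3.xb.1]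

lemma starGaugeSq_le_of_varrho_le (h12 : varrho B1 B2 ≤ t) (h23 : varrho B2 B3 ≤ t) :
    B1.starGaugeSq (B1.xs.1 - B3.xs.1) ≤ 2 * t + 2 * t ^ 4 := by
  obtain ⟨hs12, -, hq12, -⟩ := terms_le_of_varrho_le h12
  obtain ⟨-, -, hq23, -⟩ := terms_le_of_varrho_le h23
  have hrad : (B2.rad / B1.rad) ^ 2 ≤ t ^ 2 := pow_le_pow_left₀ (div_nonneg B2.hrad.le B1.hrad.le)
    ((div_le_iff₀ B1.hrad).mpr (rad_le_of_varrho_le h12)) 2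
  have hcomp : B1.starGaugeSq (B2.xs.1 - B3.xs.1) ≤ t ^ 4 :=
    calc B1.starGaugeSq (B2.xs.1 - B3.xs.1)
        ≤ B1.distortion B2 * (B2.rad / B1.rad) ^ 2 * B2.starGaugeSq (B2.xs.1 - B3.xs.1) :=
          B1.starGaugeSq_le_distortion_mul B2 _
      _ ≤ t * t ^ 2 * t := by
          have := B2.starGaugeSq_nonneg (B2.xs.1 - B3.xs.1)
          have := B1.distortion_nonneg B2
          have := zero_le_one.trans (one_le_of_varrho_le h12)
          gcongr
      _ = t ^ 4 := by ring
  linarith [B1.starGaugeSq_sub_le B1.xs.1 B2.xs.1 B3.xs.1]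

lemma abs_Theta_div_le_of_varrho_le (h12 : varrho B1 B2 ≤ t) (h23 : varrho B2 B3 ≤ t) :
    |Theta d B3.xb B1.xs| / B1.rad ≤ 3 * t + 5 * t ^ 2 + 2 * t ^ 3 := by
  have ht : 0 ≤ t := zero_le_one.trans (one_le_of_varrho_le h12)
  have hρ2 : B2.rad ≤ t * B1.rad := rad_le_of_varrho_le h12
  have hρ3 : B3.rad ≤ t * (t * B1.rad) := (rad_le_of_varrho_le h23).trans (by gcongr)
  have htρ2 : t * B2.rad ≤ t ^ 2 * B1.rad := by nlinarith
  have htρ3 : t * B3.rad ≤ t ^ 3 * B1.rad := by nlinarith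
  have hsplit := abs_Theta_le B3.xb B2.xs B2.xb B1.xs
  rw [Theta_xs_xb, abs_zero] at hsplit
  obtain ⟨-, -, -, hθ12⟩ := terms_le_of_varrho_le h12
  obtain ⟨-, -, -, hθ23⟩ := terms_le_of_varrho_le h23
  rw [div_le_iff₀ B1.hrad]
  linarith [norm_sq_add_norm_sq_le_of_varrho_le h12, norm_sq_add_norm_sq_le_of_varrho_le h23,
    sq_nonneg ‖B1.xs.1 - B1.xb.1‖]

lemma varrhoHalf_le_of_varrho_le (h12 : varrho B1 B2 ≤ t) (h23 : varrho B2 B3 ≤ t) :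
    varrhoHalf B1 B3 ≤ 19 * t ^ 4 := by
  have ht := one_le_of_varrho_le h12
  have ht1 : t ≤ t ^ 4 := by simpa using pow_le_pow_right₀ ht (show 1 ≤ 4 by norm_num)
  have ht2 : t ^ 2 ≤ t ^ 4 := pow_le_pow_right₀ ht (by norm_num)
  have ht3 : t ^ 3 ≤ t ^ 4 := pow_le_pow_right₀ ht (by norm_num)
  unfold varrhoHalf
  linarith [distortion_le_of_varrho_le h12 h23, gaugeSq_le_of_varrho_le h12 h23,
    starGaugeSq_le_of_varrho_le h12 h23, abs_Theta_div_le_of_varrho_le h12 h23]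

lemma varrho_le_of_varrho_le (h12 : varrho B1 B2 ≤ t) (h23 : varrho B2 B3 ≤ t) :
    varrho B1 B3 ≤ 39 * t ^ 4 := by
  have ht := one_le_of_varrho_le h12
  have h32 : varrho B3 B2 ≤ t := varrho_comm B2 B3 ▸ h23
  have h21 : varrho B2 B1 ≤ t := varrho_comm B1 B2 ▸ h12
  have hratio : max B1.rad B3.rad / min B1.rad B3.rad ≤ t ^ 4 := by
    refine max_div_min_le B1.hrad B3.hrad ?_ ?_
    · calc B1.rad ≤ t * B2.rad := rad_le_of_varrho_le h21
        _ ≤ t * (t * B3.rad) := by gcongr; exact rad_le_of_varrho_le h32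
        _ ≤ t ^ 4 * B3.rad := by nlinarith [B3.hrad, pow_le_pow_right₀ ht (show 2 ≤ 4 by norm_num)]
    · calc B3.rad ≤ t * B2.rad := rad_le_of_varrho_le h23
        _ ≤ t * (t * B1.rad) := by gcongr; exact rad_le_of_varrho_le h12
        _ ≤ t ^ 4 * B1.rad := by nlinarith [B1.hrad, pow_le_pow_right₀ ht (show 2 ≤ 4 by norm_num)]
  rw [varrho_eq_add_varrhoHalf]
  linarith [varrhoHalf_le_of_varrho_le h12 h23, varrhoHalf_le_of_varrho_le h32 h21]

end QuasiTriangle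

theorem paraball_quasitriangle_general (d : ℕ) :
    ∃ C : ℝ, 0 < C ∧ ∀ B1 B2 B3 : Paraball d,
      varrho B1 B3 ≤ C * varrho B1 B2 ^ C + C * varrho B2 B3 ^ C := by
  refine ⟨39, by norm_num, fun B1 B2 B3 => ?_⟩
  set a := varrho B1 B2
  set b := varrho B2 B3
  have hpow : ∀ x : ℝ, 1 ≤ x → x ^ 4 ≤ x ^ (39 : ℝ) := fun x hx => by
    exact_mod_cast Real.rpow_le_rpow_of_exponent_le hx (show (4 : ℝ) ≤ 39 by norm_num)
  have ha4 : 0 ≤ a ^ 4 := by positivity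
  have hb4 : 0 ≤ b ^ 4 := by positivity
  calc varrho B1 B3 ≤ 39 * max a b ^ 4 :=
        varrho_le_of_varrho_le (le_max_left a b) (le_max_right a b)
    _ ≤ 39 * (a ^ 4 + b ^ 4) := by
        rcases max_choice a b with h | h <;> rw [h] <;> linarith
    _ ≤ 39 * a ^ (39 : ℝ) + 39 * b ^ (39 : ℝ) := by
        linarith [hpow a (one_le_varrho B1 B2), hpow b (one_le_varrho B2 B3)]

/-- Quasi-triangle inequality for the quasidistance `ϱ` between paraballs. -/
theorem paraball_quasitriangle (d : ℕ) (hd : 2 ≤ d) :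
    ∃ C : ℝ, 0 < C ∧ ∀ B1 B2 B3 : Paraball d,
      varrho B1 B3 ≤ C * varrho B1 B2 ^ C + C * varrho B2 B3 ^ C :=
  paraball_quasitriangle_general d

end RadonParaboloid
end
end

section
/- The action of 𝒢_d on ℝ^d is generically d-fold transitive: for any two d-tuples of points {x_j : 1 ≤ j ≤ d} and {y_j : 1 ≤ j ≤ d} in ℝ^d, each lying in general position, there exists φ ∈ 𝒢_d satisfying φ(x_j) = y_j for all 1 ≤ j ≤ d. -/
open MeasureTheory Filter Set
open scoped ENNReal RealInnerProductSpace

noncomputable section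

namespace RadonParaboloid

/-- A collection of `d` points of `ℝ^d` lies in general position if the `d × d` matrix whose
`j`-th row consists of the first `d-1` coordinates of `x_j` followed by `1` is nonsingular. -/
def GeneralPosition (d : ℕ) (x : Fin d → E d) : Prop :=
  (Matrix.of fun j i : Fin d =>
    if h : (i : ℕ) < d - 1 then (x j).1 ⟨(i : ℕ), h⟩ else 1).det ≠ 0

/-!
For an invertible linear map `L` of `ℝ^{d-1}`, `a, b ∈ ℝ^{d-1}` and `c ∈ ℝ`, the shear
`φ(x) = (L x' + a, x_d + |L x' + a|² - |x'|² - 2⟨L x' + a, b⟩ + c)` lies in `𝒢_d`: the analogous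
shear `ψ` built from the contragredient `L⁻ᵀ` satisfies `Θ(φ x, ψ y) = Θ(x, y)`.
The conditions `φ(x_j) = y_j` decouple. Horizontally one needs an affine map of `ℝ^{d-1}` with
`x_j' ↦ y_j'`; general position of the `x_j` means that the lifted vectors `(x_j', 1)` form a basis
of `ℝ^d`, so the affine map exists, and it is invertible because the `(y_j', 1)` form a basis too.
Vertically one needs `-2⟨y_j', b⟩ + c = y_{j,d} - x_{j,d} + |x_j'|² - |y_j'|²`, a linear system
for `(b, c)` whose matrix is that of the lifted `y_j`.
-/

section Contragredient

variable {V : Type*} [NormedAddCommGroup V] [InnerProductSpace ℝ V] [CompleteSpace V]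

open ContinuousLinearMap

def _root_.ContinuousLinearEquiv.contragredient (L : V ≃L[ℝ] V) : V ≃L[ℝ] V :=
  .equivOfInverse' (adjoint (L.symm : V →L[ℝ] V)) (adjoint (L : V →L[ℝ] V))
    (by rw [← adjoint_comp, L.coe_comp_coe_symm, adjoint_id])
    (by rw [← adjoint_comp, L.coe_symm_comp_coe, adjoint_id])

theorem _root_.ContinuousLinearEquiv.inner_apply_contragredient (L : V ≃L[ℝ] V) (v w : V) :
    ⟪L v, L.contragredient w⟫ = ⟪v, w⟫ := by
  simp [ContinuousLinearEquiv.contragredient, adjoint_inner_right]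

end Contragredient

section Symmetries

variable {d : ℕ}

def shear (L : Eh d ≃L[ℝ] Eh d) (a : Eh d) (g : Eh d → ℝ) : E d → E d :=
  fun x => (L x.1 + a, x.2 + g x.1)

theorem contDiff_shear (L : Eh d ≃L[ℝ] Eh d) (a : Eh d) {g : Eh d → ℝ}
    (hg : ContDiff ℝ (⊤ : ℕ∞) g) : ContDiff ℝ (⊤ : ℕ∞) (shear L a g) :=
  ((L.contDiff.comp contDiff_fst).add contDiff_const).prodMk
    (contDiff_snd.add (hg.comp contDiff_fst))

theorem isSmoothDiffeo_shear (L : Eh d ≃L[ℝ] Eh d) (a : Eh d) {g : Eh d → ℝ}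
    (hg : ContDiff ℝ (⊤ : ℕ∞) g) : IsSmoothDiffeo d (shear L a g) :=
  ⟨shear L.symm (-L.symm a) fun v => -g (L.symm v + -L.symm a), contDiff_shear L a hg,
    contDiff_shear _ _ (hg.comp (L.symm.contDiff.add contDiff_const)).neg,
    fun x => by simp [shear], fun x => by simp [shear]⟩

/-- Since `Θ(x, y) = (x_d - |x'|²) - (y_d + |y'|²) + 2⟨x', y'⟩` and `⟨L x', L⁻ᵀ y'⟩ = ⟨x', y'⟩`,
the vertical terms of `symmetryMap` and `dualSymmetryMap` cancel what the horizontal affine maps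
add to `Θ`. -/
def symmetryMap (L : Eh d ≃L[ℝ] Eh d) (a b : Eh d) (c : ℝ) : E d → E d :=
  shear L a fun v => ‖L v + a‖ ^ 2 - ‖v‖ ^ 2 - 2 * ⟪L v + a, b⟫ + c

def dualSymmetryMap (L : Eh d ≃L[ℝ] Eh d) (a b : Eh d) (c : ℝ) : E d → E d :=
  shear L.contragredient b fun w =>
    ‖w‖ ^ 2 - ‖L.contragredient w + b‖ ^ 2 + 2 * ⟪a, L.contragredient w⟫ + c

theorem theta_symmetryMap_dualSymmetryMap (L : Eh d ≃L[ℝ] Eh d) (a b : Eh d) (c : ℝ)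
    (x y : E d) : Theta d (symmetryMap L a b c x) (dualSymmetryMap L a b c y) = Theta d x y := by
  simp only [Theta, symmetryMap, dualSymmetryMap, shear]
  rw [norm_sub_sq_real, norm_sub_sq_real x.1]
  simp only [inner_add_left, inner_add_right, L.inner_apply_contragredient]
  ring

theorem symmetryMap_mem_Gd (L : Eh d ≃L[ℝ] Eh d) (a b : Eh d) (c : ℝ) :
    symmetryMap L a b c ∈ Gd d := by
  have hL : ContDiff ℝ (⊤ : ℕ∞) fun v : Eh d => L v + a := by fun_prop
  have hM : ContDiff ℝ (⊤ : ℕ∞) fun w : Eh d => L.contragredient w + b := by fun_prop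
  refine ⟨dualSymmetryMap L a b c, ?_, ?_, 1, one_ne_zero, fun x y => ?_⟩
  · exact isSmoothDiffeo_shear L a ((((hL.norm_sq ℝ).sub (contDiff_norm_sq ℝ)).sub
      (contDiff_const.mul (hL.inner ℝ contDiff_const))).add contDiff_const)
  · exact isSmoothDiffeo_shear _ b ((((contDiff_norm_sq ℝ).sub (hM.norm_sq ℝ)).add
      (contDiff_const.mul (contDiff_const.inner ℝ L.contragredient.contDiff))).add contDiff_const)
  · rw [one_mul, theta_symmetryMap_dualSymmetryMap]

end Symmetries

section LiftedPoints

open Matrix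

variable {m : ℕ}

theorem _root_.Matrix.det_eq_det_submatrix_castSucc {R : Type*} [CommRing R]
    {C : Matrix (Fin (m + 1)) (Fin (m + 1)) R}
    (hC : ∀ i, C i (Fin.last m) = (1 : Matrix (Fin (m + 1)) (Fin (m + 1)) R) i (Fin.last m)) :
    C.det = (C.submatrix Fin.castSucc Fin.castSucc).det := by
  rw [det_succ_column C (Fin.last m), Finset.sum_eq_single (Fin.last m)]
  · simp [hC, Fin.succAbove_last, ← two_mul, pow_mul]
  · intro i _ hi
    simp [hC, one_apply_ne hi]
  · simp

def _root_.Matrix.toEuclideanCLE {𝕜 n : Type*} [RCLike 𝕜] [Fintype n] [DecidableEq n]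
    (A : Matrix n n 𝕜) (hA : IsUnit A.det) : EuclideanSpace 𝕜 n ≃L[𝕜] EuclideanSpace 𝕜 n :=
  .equivOfInverse (toEuclideanCLM (𝕜 := 𝕜) A) (toEuclideanCLM (𝕜 := 𝕜) A⁻¹)
    (fun v => by
      rw [← mul_apply_eq_comp, ← map_mul, nonsing_inv_mul _ hA, map_one, one_apply_eq_self])
    (fun v => by
      rw [← mul_apply_eq_comp, ← map_mul, mul_nonsing_inv _ hA, map_one, one_apply_eq_self])

def liftMatrix (p : Fin (m + 1) → EuclideanSpace ℝ (Fin m)) :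
    Matrix (Fin (m + 1)) (Fin (m + 1)) ℝ :=
  Matrix.of fun j => Fin.snoc (p j).ofLp 1

theorem generalPosition_iff_det_liftMatrix_ne_zero (x : Fin (m + 1) → E (m + 1)) :
    GeneralPosition (m + 1) x ↔ (liftMatrix fun j => (x j).1).det ≠ 0 :=
  Iff.rfl

theorem liftMatrix_mulVec_apply (p : Fin (m + 1) → EuclideanSpace ℝ (Fin m))
    (w : Fin (m + 1) → ℝ) (j : Fin (m + 1)) :
    (liftMatrix p *ᵥ w) j = ⟪p j, WithLp.toLp 2 (w ∘ Fin.castSucc)⟫ + w (Fin.last m) := by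
  simp [liftMatrix, mulVec, dotProduct, Fin.sum_univ_castSucc, PiLp.inner_apply, mul_comm]

theorem exists_inner_add_eq {p : Fin (m + 1) → EuclideanSpace ℝ (Fin m)}
    (hp : (liftMatrix p).det ≠ 0) (r : Fin (m + 1) → ℝ) :
    ∃ (b : EuclideanSpace ℝ (Fin m)) (c : ℝ), ∀ j, ⟪p j, b⟫ + c = r j := by
  have hw : liftMatrix p *ᵥ ((liftMatrix p)⁻¹ *ᵥ r) = r := by
    rw [mulVec_mulVec, mul_nonsing_inv _ (isUnit_iff_ne_zero.2 hp), one_mulVec]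
  exact ⟨_, _, fun j => by rw [← liftMatrix_mulVec_apply, hw]⟩

theorem exists_continuousLinearEquiv_add_eq {p q : Fin (m + 1) → EuclideanSpace ℝ (Fin m)}
    (hp : (liftMatrix p).det ≠ 0) (hq : (liftMatrix q).det ≠ 0) :
    ∃ (L : EuclideanSpace ℝ (Fin m) ≃L[ℝ] EuclideanSpace ℝ (Fin m))
      (a : EuclideanSpace ℝ (Fin m)), ∀ j, L (p j) + a = q j := by
  have hP : IsUnit (liftMatrix p).det := isUnit_iff_ne_zero.2 hp
  set C := (liftMatrix p)⁻¹ * liftMatrix q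
  have hPC : liftMatrix p * C = liftMatrix q := by
    rw [← Matrix.mul_assoc, mul_nonsing_inv _ hP, Matrix.one_mul]
  -- `p` and `q` are lifted by the same last column of ones, so `C` is the lift of an affine map
  have hC : ∀ i, C i (Fin.last m) = (1 : Matrix (Fin (m + 1)) (Fin (m + 1)) ℝ) i (Fin.last m) := by
    intro i
    rw [← nonsing_inv_mul _ hP]
    simp [C, mul_apply, liftMatrix]
  set A := (C.submatrix Fin.castSucc Fin.castSucc)ᵀ
  have hA : IsUnit A.det := by
    rw [det_transpose, ← det_eq_det_submatrix_castSucc hC, det_mul]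
    exact (isUnit_nonsing_inv_det _ hP).mul (isUnit_iff_ne_zero.2 hq)
  refine ⟨A.toEuclideanCLE hA, WithLp.toLp 2 fun k => C (Fin.last m) k.castSucc, fun j => ?_⟩
  ext k
  have hjk := congrFun (congrFun hPC j) k.castSucc
  simp only [liftMatrix, mul_apply, of_apply, Fin.sum_univ_castSucc, Fin.snoc_castSucc,
    Fin.snoc_last, one_mul] at hjk
  simp [toEuclideanCLE, A, ← hjk, mulVec, dotProduct, mul_comm]

end LiftedPoints

theorem generically_d_fold_transitive_general (d : ℕ)
    (x y : Fin d → E d) (hx : GeneralPosition d x) (hy : GeneralPosition d y) :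
    ∃ φ ∈ Gd d, ∀ j : Fin d, φ (x j) = y j := by
  rcases d with _ | m
  · exact ⟨_, symmetryMap_mem_Gd (.refl ℝ _) 0 0 0, finZeroElim⟩
  rw [generalPosition_iff_det_liftMatrix_ne_zero] at hx hy
  obtain ⟨L, a, hLa⟩ := exists_continuousLinearEquiv_add_eq hx hy
  obtain ⟨b, c, hbc⟩ := exists_inner_add_eq hy fun j =>
    (y j).2 - (x j).2 + ‖(x j).1‖ ^ 2 - ‖(y j).1‖ ^ 2
  refine ⟨symmetryMap L a ((-2⁻¹ : ℝ) • b) c, symmetryMap_mem_Gd _ _ _ _,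
    fun j => Prod.ext (hLa j) ?_⟩
  have hj := hbc j
  simp only [symmetryMap, shear, hLa j, inner_smul_right] at hj ⊢
  linarith

/-- The action of `𝒢_d` on `ℝ^d` is generically `d`-fold transitive. -/
theorem generically_d_fold_transitive (d : ℕ) (hd : 2 ≤ d)
    (x y : Fin d → E d) (hx : GeneralPosition d x) (hy : GeneralPosition d y) :
    ∃ φ ∈ Gd d, ∀ j : Fin d, φ (x j) = y j :=
  generically_d_fold_transitive_general d x y hx hy

end RadonParaboloid
end
end

section
/- Let A ∈ GL(d,ℝ) and let φ : V → U be a C^2 diffeomorphism of an open set V ⊂ ℝ^{d−1} onto a subset U of the domain of F. Then the affine surface measure satisfies σ_{A∘F}(U) = |det(A)|^{(d−1)/(d+1)} σ_F(U) and σ_{F∘φ}(V) = σ_F(φ(V)). -/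
/-!
Both identities hold pointwise for `ℒ` and are then integrated. Each `F_{i,j}` is the determinant
of a bordered matrix, linear in its last column. Composing with `A` multiplies that whole matrix by
`A`, so `F_{i,j}` scales by `det A` and `ℒ` by `(det A)^{d-1}`. Under `F ↦ F ∘ φ`, the first `d - 1`
columns are transformed by `Dφ`, while by the chain rule the last column becomes
`D²F(Dφ e_j, Dφ e_i)` plus a combination of the first columns, which the determinant ignores. Hence
`(F ∘ φ)_{i,j} = det Dφ · (Dφᵀ (F_{k,l} ∘ φ) Dφ)_{i,j}` and `ℒ_{F∘φ} = (det Dφ)^{d+1} · ℒ_F ∘ φ`;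
the exponent `1/(d+1)` turns this factor into the Jacobian `|det Dφ|` of the change of variables.
-/

open MeasureTheory Filter Set
open scoped ENNReal RealInnerProductSpace

noncomputable section

namespace RadonParaboloid

/-- The mixed-derivative determinant `F_{i,j}(t)`: the determinant of the `d × d` matrix whose
first `d-1` columns are `∂F/∂t_1, …, ∂F/∂t_{d-1}` and whose last column is `∂²F/∂t_i∂t_j`. -/
def Fmix (d : ℕ) (F : (Fin (d - 1) → ℝ) → Fin d → ℝ) (i j : Fin (d - 1))
    (t : Fin (d - 1) → ℝ) : ℝ :=
  (Matrix.of fun (row col : Fin d) =>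
    if h : (col : ℕ) < d - 1 then
      fderiv ℝ F t (Pi.single (⟨(col : ℕ), h⟩ : Fin (d - 1)) 1) row
    else fderiv ℝ (fun s => fderiv ℝ F s (Pi.single i 1)) t (Pi.single j 1) row).det

/-- `ℒ_F(t) = det (F_{i,j}(t))_{i,j}`. -/
def calL (d : ℕ) (F : (Fin (d - 1) → ℝ) → Fin d → ℝ) (t : Fin (d - 1) → ℝ) : ℝ :=
  (Matrix.of fun i j : Fin (d - 1) => Fmix d F i j t).det

/-- The affine surface measure `σ_F(U) = ∫_U |ℒ_F(t)|^{1/(d+1)} dt`. -/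
def affSurf (d : ℕ) (F : (Fin (d - 1) → ℝ) → Fin d → ℝ) (U : Set (Fin (d - 1) → ℝ)) : ℝ :=
  ∫ t in U, |calL d F t| ^ (1 / ((d : ℝ) + 1))

def borderedMatrix (d : ℕ) (C : Fin (d - 1) → Fin d → ℝ) (w : Fin d → ℝ) :
    Matrix (Fin d) (Fin d) ℝ :=
  Matrix.of fun row col => if h : (col : ℕ) < d - 1 then C ⟨col, h⟩ row else w row

theorem Fmix_eq_det_borderedMatrix (d : ℕ) (F : (Fin (d - 1) → ℝ) → Fin d → ℝ)
    (i j : Fin (d - 1)) (t : Fin (d - 1) → ℝ) :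
    Fmix d F i j t = (borderedMatrix d (fun k => fderiv ℝ F t (Pi.single k 1))
      (fderiv ℝ (fun s => fderiv ℝ F s (Pi.single i 1)) t (Pi.single j 1))).det :=
  rfl

section BorderedMatrix

variable {d : ℕ}

theorem borderedMatrix_map (A : (Fin d → ℝ) →ₗ[ℝ] Fin d → ℝ) (C : Fin (d - 1) → Fin d → ℝ)
    (w : Fin d → ℝ) :
    borderedMatrix d (fun k => A (C k)) (A w) = LinearMap.toMatrix' A * borderedMatrix d C w := by
  ext row col
  simp only [borderedMatrix, Matrix.mul_apply, Matrix.of_apply, ← LinearMap.toMatrix'_mulVec A,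
    Matrix.mulVec, dotProduct]
  split_ifs <;> rfl

theorem det_borderedMatrix_map (A : (Fin d → ℝ) →ₗ[ℝ] Fin d → ℝ) (C : Fin (d - 1) → Fin d → ℝ)
    (w : Fin d → ℝ) :
    (borderedMatrix d (fun k => A (C k)) (A w)).det =
      LinearMap.det A * (borderedMatrix d C w).det := by
  rw [borderedMatrix_map, Matrix.det_mul, LinearMap.det_toMatrix']

def borderedIndex (hd : 0 < d) : Fin (d - 1) ⊕ Fin 1 ≃ Fin d :=
  finSumFinEquiv.trans (finCongr (Nat.sub_add_cancel hd))

theorem borderedMatrix_borderedIndex_inl (hd : 0 < d) (C : Fin (d - 1) → Fin d → ℝ)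
    (w : Fin d → ℝ) (row : Fin d) (k : Fin (d - 1)) :
    borderedMatrix d C w row (borderedIndex hd (.inl k)) = C k row := by
  simp [borderedMatrix, borderedIndex]

theorem borderedMatrix_borderedIndex_inr (hd : 0 < d) (C : Fin (d - 1) → Fin d → ℝ)
    (w : Fin d → ℝ) (row : Fin d) (j : Fin 1) :
    borderedMatrix d C w row (borderedIndex hd (.inr j)) = w row := by
  simp [borderedMatrix, borderedIndex]

theorem borderedMatrix_eq_updateCol (hd : 0 < d) (C : Fin (d - 1) → Fin d → ℝ) (w : Fin d → ℝ) :
    borderedMatrix d C w = (borderedMatrix d C 0).updateCol (borderedIndex hd (.inr 0)) w := by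
  ext row col
  obtain ⟨s | s, rfl⟩ := (borderedIndex hd).surjective col
  · simp [borderedMatrix_borderedIndex_inl]
  · simp [borderedMatrix_borderedIndex_inr, Fin.fin_one_eq_zero s]

def borderedDet (hd : 0 < d) (C : Fin (d - 1) → Fin d → ℝ) : (Fin d → ℝ) →ₗ[ℝ] ℝ where
  toFun w := (borderedMatrix d C w).det
  map_add' v w := by
    simp only [borderedMatrix_eq_updateCol hd C (v + w), borderedMatrix_eq_updateCol hd C v,
      borderedMatrix_eq_updateCol hd C w]
    exact Matrix.det_updateCol_add _ _ _ _
  map_smul' c w := by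
    simp only [borderedMatrix_eq_updateCol hd C (c • w), borderedMatrix_eq_updateCol hd C w]
    exact Matrix.det_updateCol_smul _ _ _ _

theorem borderedDet_apply (hd : 0 < d) (C : Fin (d - 1) → Fin d → ℝ) (w : Fin d → ℝ) :
    borderedDet hd C w = (borderedMatrix d C w).det :=
  rfl

theorem borderedMatrix_combination_eq_mul (hd : 0 < d) (C : Fin (d - 1) → Fin d → ℝ)
    (w : Fin d → ℝ) (P : Matrix (Fin (d - 1)) (Fin (d - 1)) ℝ) (a : Fin (d - 1) → ℝ) :
    borderedMatrix d (fun k => ∑ c, P c k • C c) (w + ∑ c, a c • C c) =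
      borderedMatrix d C w *
        Matrix.reindex (borderedIndex hd) (borderedIndex hd)
          (Matrix.fromBlocks P (Matrix.of fun c _ => a c) 0 1) := by
  ext row col
  rw [Matrix.mul_apply, ← (borderedIndex hd).sum_comp, Fintype.sum_sum_type]
  obtain ⟨s | s, rfl⟩ := (borderedIndex hd).surjective col
  · simp [borderedMatrix_borderedIndex_inl, borderedMatrix_borderedIndex_inr, mul_comm]
  · simp [borderedMatrix_borderedIndex_inl, borderedMatrix_borderedIndex_inr, mul_comm,
      Fin.fin_one_eq_zero s, add_comm]

theorem det_borderedMatrix_combination (hd : 0 < d) (C : Fin (d - 1) → Fin d → ℝ)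
    (w : Fin d → ℝ) (P : Matrix (Fin (d - 1)) (Fin (d - 1)) ℝ) (a : Fin (d - 1) → ℝ) :
    (borderedMatrix d (fun k => ∑ c, P c k • C c) (w + ∑ c, a c • C c)).det =
      P.det * (borderedMatrix d C w).det := by
  rw [borderedMatrix_combination_eq_mul hd, Matrix.det_mul, Matrix.det_reindex_self,
    Matrix.det_fromBlocks_zero₂₁, Matrix.det_one, mul_one, mul_comm]

end BorderedMatrix

theorem map_eq_sum_smul_map_single {ι R M N : Type*} [Fintype ι] [DecidableEq ι] [Semiring R]
    [AddCommMonoid M] [Module R M] [FunLike N (ι → R) M] [LinearMapClass N R (ι → R) M]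
    (f : N) (v : ι → R) :
    f v = ∑ i, v i • f (Pi.single i 1) := by
  conv_lhs => rw [pi_eq_sum_univ' v]
  simp only [map_sum, map_smul]

section SecondDerivative

variable {𝕜 E F G : Type*} [NontriviallyNormedField 𝕜] [NormedAddCommGroup E] [NormedSpace 𝕜 E]
  [NormedAddCommGroup F] [NormedSpace 𝕜 F] [NormedAddCommGroup G] [NormedSpace 𝕜 G]

theorem fderiv_fderiv_apply {f : E → F} {x : E} (hf : DifferentiableAt 𝕜 (fderiv 𝕜 f) x)
    (u v : E) :
    fderiv 𝕜 (fun s => fderiv 𝕜 f s u) x v = fderiv 𝕜 (fderiv 𝕜 f) x v u := by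
  rw [fderiv_clm_apply hf (differentiableAt_const u)]
  simp

theorem fderiv_fderiv_comp_apply {f : F → G} {g : E → F} {x : E}
    (hf : ContDiffAt 𝕜 2 f (g x)) (hg : ContDiffAt 𝕜 2 g x) (u v : E) :
    fderiv 𝕜 (fun s => fderiv 𝕜 (f ∘ g) s u) x v =
      fderiv 𝕜 (fderiv 𝕜 f) (g x) (fderiv 𝕜 g x v) (fderiv 𝕜 g x u) +
        fderiv 𝕜 f (g x) (fderiv 𝕜 (fderiv 𝕜 g) x v u) := by
  have hchain : (fun s => fderiv 𝕜 (f ∘ g) s u) =ᶠ[nhds x]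
      fun s => fderiv 𝕜 f (g s) (fderiv 𝕜 g s u) := by
    filter_upwards [hg.eventually (by simp), hg.continuousAt.eventually (hf.eventually (by simp))]
      with s hgs hfs
    rw [fderiv_comp s (hfs.differentiableAt (by simp)) (hgs.differentiableAt (by simp))]
    rfl
  have hDf : HasFDerivAt (fun s => fderiv 𝕜 f (g s))
      ((fderiv 𝕜 (fderiv 𝕜 f) (g x)).comp (fderiv 𝕜 g x)) x :=
    ((hf.fderiv_right le_rfl).differentiableAt one_ne_zero).hasFDerivAt.comp x
      (hg.differentiableAt (by simp)).hasFDerivAt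
  have hDg : DifferentiableAt 𝕜 (fderiv 𝕜 g) x :=
    (hg.fderiv_right le_rfl).differentiableAt one_ne_zero
  rw [hchain.fderiv_eq, (hDf.clm_apply (hDg.hasFDerivAt.clm_apply (hasFDerivAt_const u x))).fderiv]
  simp [add_comm]

end SecondDerivative

def mixMatrix (d : ℕ) (F : (Fin (d - 1) → ℝ) → Fin d → ℝ) (t : Fin (d - 1) → ℝ) :
    Matrix (Fin (d - 1)) (Fin (d - 1)) ℝ :=
  Matrix.of fun i j => Fmix d F i j t

theorem calL_eq_det_mixMatrix (d : ℕ) (F : (Fin (d - 1) → ℝ) → Fin d → ℝ)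
    (t : Fin (d - 1) → ℝ) :
    calL d F t = (mixMatrix d F t).det :=
  rfl

section Invariance

variable {d : ℕ} {F : (Fin (d - 1) → ℝ) → Fin d → ℝ}

theorem Fmix_linearEquiv (A : (Fin d → ℝ) ≃ₗ[ℝ] Fin d → ℝ) (i j : Fin (d - 1))
    (t : Fin (d - 1) → ℝ) :
    Fmix d (fun s => A (F s)) i j t = LinearMap.det A.toLinearMap * Fmix d F i j t := by
  have hD : ∀ {G : (Fin (d - 1) → ℝ) → Fin d → ℝ} s,
      fderiv ℝ (fun s => A (G s)) s = (A.toContinuousLinearEquiv : _ →L[ℝ] _).comp (fderiv ℝ G s) :=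
    fun s => A.toContinuousLinearEquiv.comp_fderiv
  simp only [Fmix_eq_det_borderedMatrix, hD, ContinuousLinearMap.comp_apply,
    ContinuousLinearEquiv.coe_coe, LinearEquiv.coe_toContinuousLinearEquiv']
  exact det_borderedMatrix_map A.toLinearMap _ _

theorem calL_linearEquiv (A : (Fin d → ℝ) ≃ₗ[ℝ] Fin d → ℝ) (t : Fin (d - 1) → ℝ) :
    calL d (fun s => A (F s)) t = LinearMap.det A.toLinearMap ^ (d - 1) * calL d F t := by
  have hmix : mixMatrix d (fun s => A (F s)) t = LinearMap.det A.toLinearMap • mixMatrix d F t := by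
    ext i j
    exact Fmix_linearEquiv A i j t
  rw [calL_eq_det_mixMatrix, hmix, Matrix.det_smul, Fintype.card_fin, calL_eq_det_mixMatrix]

end Invariance

section Reparametrization

variable {d : ℕ} {F : (Fin (d - 1) → ℝ) → Fin d → ℝ} {φ : (Fin (d - 1) → ℝ) → Fin (d - 1) → ℝ}
  {t : Fin (d - 1) → ℝ}

theorem fderiv_comp_apply_single (hF : DifferentiableAt ℝ F (φ t))
    (hφ : DifferentiableAt ℝ φ t) (k : Fin (d - 1)) :
    fderiv ℝ (F ∘ φ) t (Pi.single k 1) =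
      ∑ c, fderiv ℝ φ t (Pi.single k 1) c • fderiv ℝ F (φ t) (Pi.single c 1) := by
  rw [fderiv_comp t hF hφ, ContinuousLinearMap.comp_apply, map_eq_sum_smul_map_single]

theorem fderiv_fderiv_comp_apply_single (hF : ContDiffAt ℝ 2 F (φ t))
    (hφ : ContDiffAt ℝ 2 φ t) (i j : Fin (d - 1)) :
    fderiv ℝ (fun s => fderiv ℝ (F ∘ φ) s (Pi.single i 1)) t (Pi.single j 1) =
      ∑ l, ∑ k, (fderiv ℝ φ t (Pi.single j 1) l * fderiv ℝ φ t (Pi.single i 1) k) •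
          fderiv ℝ (fderiv ℝ F) (φ t) (Pi.single l 1) (Pi.single k 1) +
        ∑ c, fderiv ℝ (fderiv ℝ φ) t (Pi.single j 1) (Pi.single i 1) c •
          fderiv ℝ F (φ t) (Pi.single c 1) := by
  rw [fderiv_fderiv_comp_apply hF hφ, map_eq_sum_smul_map_single (fderiv ℝ (fderiv ℝ F) (φ t))]
  congr 1
  · rw [_root_.sum_apply]
    refine Finset.sum_congr rfl fun l _ => ?_
    rw [_root_.smul_apply, map_eq_sum_smul_map_single (fderiv ℝ (fderiv ℝ F) (φ t) _),
      Finset.smul_sum]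
    simp only [smul_smul]
  · exact map_eq_sum_smul_map_single _ _

theorem Fmix_comp (hd : 0 < d) (hF : ContDiffAt ℝ 2 F (φ t)) (hφ : ContDiffAt ℝ 2 φ t)
    (i j : Fin (d - 1)) :
    Fmix d (F ∘ φ) i j t =
      let P := LinearMap.toMatrix' (fderiv ℝ φ t : (Fin (d - 1) → ℝ) →ₗ[ℝ] Fin (d - 1) → ℝ)
      P.det * (P.transpose * mixMatrix d F (φ t) * P) i j := by
  have hD2F : DifferentiableAt ℝ (fderiv ℝ F) (φ t) :=
    (hF.fderiv_right le_rfl).differentiableAt one_ne_zero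
  simp only [Fmix_eq_det_borderedMatrix,
    fderiv_comp_apply_single (hF.differentiableAt two_ne_zero) (hφ.differentiableAt two_ne_zero),
    fderiv_fderiv_comp_apply_single hF hφ]
  refine (det_borderedMatrix_combination hd _ _
    (LinearMap.toMatrix' (fderiv ℝ φ t : (Fin (d - 1) → ℝ) →ₗ[ℝ] Fin (d - 1) → ℝ)) _).trans ?_
  rw [← borderedDet_apply hd]
  simp only [map_sum, map_smul, borderedDet_apply, ← fderiv_fderiv_apply hD2F,
    ← Fmix_eq_det_borderedMatrix, Matrix.mul_apply, Finset.sum_mul, smul_eq_mul]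
  congr 1
  refine Finset.sum_congr rfl fun l _ => Finset.sum_congr rfl fun k _ => ?_
  simp only [Matrix.transpose_apply, LinearMap.toMatrix'_apply, ContinuousLinearMap.coe_coe,
    mixMatrix, Matrix.of_apply]
  ring

theorem calL_comp (hd : 0 < d) (hF : ContDiffAt ℝ 2 F (φ t)) (hφ : ContDiffAt ℝ 2 φ t) :
    calL d (F ∘ φ) t = (fderiv ℝ φ t).det ^ (d + 1) * calL d F (φ t) := by
  set P := LinearMap.toMatrix' (fderiv ℝ φ t : (Fin (d - 1) → ℝ) →ₗ[ℝ] Fin (d - 1) → ℝ)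
  have hmix : mixMatrix d (F ∘ φ) t = P.det • (P.transpose * mixMatrix d F (φ t) * P) := by
    ext i j
    exact Fmix_comp hd hF hφ i j
  have hP : P.det = (fderiv ℝ φ t).det := LinearMap.det_toMatrix' _
  rw [calL_eq_det_mixMatrix, hmix, Matrix.det_smul, Matrix.det_mul, Matrix.det_mul,
    Matrix.det_transpose, Fintype.card_fin, hP, ← calL_eq_det_mixMatrix]
  obtain ⟨n, rfl⟩ := Nat.exists_eq_add_of_lt hd
  simp only [Nat.zero_add, Nat.add_sub_cancel]
  ring

end Reparametrization

theorem abs_pow_mul_rpow (x y : ℝ) (n : ℕ) (r : ℝ) :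
    |x ^ n * y| ^ r = |x| ^ (n * r) * |y| ^ r := by
  rw [abs_mul, abs_pow, Real.mul_rpow (by positivity) (abs_nonneg y), ← Real.rpow_natCast,
    ← Real.rpow_mul (abs_nonneg x)]

theorem affSurf_linearEquiv {d : ℕ} (hd : 0 < d) (F : (Fin (d - 1) → ℝ) → Fin d → ℝ)
    (U : Set (Fin (d - 1) → ℝ)) (A : (Fin d → ℝ) ≃ₗ[ℝ] Fin d → ℝ) :
    affSurf d (fun t => A (F t)) U =
      |LinearMap.det A.toLinearMap| ^ (((d : ℝ) - 1) / ((d : ℝ) + 1)) * affSurf d F U := by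
  have hexp : ((d - 1 : ℕ) : ℝ) * (1 / ((d : ℝ) + 1)) = ((d : ℝ) - 1) / ((d : ℝ) + 1) := by
    rw [Nat.cast_sub hd, Nat.cast_one, mul_one_div]
  simp only [affSurf, calL_linearEquiv, abs_pow_mul_rpow, hexp, integral_const_mul]

theorem affSurf_comp {d : ℕ} (hd : 0 < d) {F : (Fin (d - 1) → ℝ) → Fin d → ℝ}
    {φ : (Fin (d - 1) → ℝ) → Fin (d - 1) → ℝ} {V : Set (Fin (d - 1) → ℝ)} (hV : MeasurableSet V)
    (hφ : ∀ t ∈ V, ContDiffAt ℝ 2 φ t) (hinj : InjOn φ V)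
    (hF : ∀ t ∈ V, ContDiffAt ℝ 2 F (φ t)) :
    affSurf d (F ∘ φ) V = affSurf d F (φ '' V) := by
  have hexp : ((d + 1 : ℕ) : ℝ) * (1 / ((d : ℝ) + 1)) = 1 := by
    push_cast
    field_simp
  rw [affSurf, affSurf, integral_image_eq_integral_abs_det_fderiv_smul volume hV
    (fun t ht => ((hφ t ht).differentiableAt two_ne_zero).hasFDerivAt.hasFDerivWithinAt) hinj]
  refine setIntegral_congr_fun hV fun t ht => ?_
  rw [calL_comp hd (hF t ht) (hφ t ht), abs_pow_mul_rpow, hexp, Real.rpow_one, smul_eq_mul]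

theorem affine_surface_measure_invariance_general (d : ℕ) (hd : 2 ≤ d)
    (F : (Fin (d - 1) → ℝ) → Fin d → ℝ) (Ω : Set (Fin (d - 1) → ℝ))
    (hΩ : IsOpen Ω) (hF : ContDiffOn ℝ 2 F Ω)
    (U : Set (Fin (d - 1) → ℝ)) (hUΩ : U ⊆ Ω)
    (A : (Fin d → ℝ) ≃ₗ[ℝ] (Fin d → ℝ))
    (V : Set (Fin (d - 1) → ℝ)) (hV : IsOpen V)
    (φ ψ : (Fin (d - 1) → ℝ) → Fin (d - 1) → ℝ)
    (hφ : ContDiffOn ℝ 2 φ V)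
    (himg : φ '' V = U) (hlr : ∀ x ∈ V, ψ (φ x) = x) :
    affSurf d (fun t => A (F t)) U =
      |LinearMap.det (A.toLinearMap)| ^ (((d : ℝ) - 1) / ((d : ℝ) + 1)) * affSurf d F U ∧
    affSurf d (F ∘ φ) V = affSurf d F (φ '' V) := by
  have hd₀ : 0 < d := by omega
  have hφΩ : MapsTo φ V Ω := fun t ht => hUΩ (himg ▸ mem_image_of_mem φ ht)
  refine ⟨affSurf_linearEquiv hd₀ F U A, affSurf_comp hd₀ hV.measurableSet
    (fun t ht => hφ.contDiffAt (hV.mem_nhds ht)) (LeftInvOn.injOn hlr)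
    (fun t ht => hF.contDiffAt (hΩ.mem_nhds (hφΩ ht)))⟩

/-- Invariance properties of affine surface measure: equivariance under invertible linear
maps of the target, and invariance under `C²` reparametrization of the source. -/
theorem affine_surface_measure_invariance (d : ℕ) (hd : 2 ≤ d)
    (F : (Fin (d - 1) → ℝ) → Fin d → ℝ) (Ω : Set (Fin (d - 1) → ℝ))
    (hΩ : IsOpen Ω) (hF : ContDiffOn ℝ 2 F Ω)
    (U : Set (Fin (d - 1) → ℝ)) (hU : MeasurableSet U) (hUΩ : U ⊆ Ω)
    (A : (Fin d → ℝ) ≃ₗ[ℝ] (Fin d → ℝ))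
    (V : Set (Fin (d - 1) → ℝ)) (hV : IsOpen V)
    (φ ψ : (Fin (d - 1) → ℝ) → Fin (d - 1) → ℝ)
    (hφ : ContDiffOn ℝ 2 φ V) (hψ : ContDiffOn ℝ 2 ψ U)
    (himg : φ '' V = U) (hlr : ∀ x ∈ V, ψ (φ x) = x) (hrl : ∀ y ∈ U, φ (ψ y) = y) :
    affSurf d (fun t => A (F t)) U =
      |LinearMap.det (A.toLinearMap)| ^ (((d : ℝ) - 1) / ((d : ℝ) + 1)) * affSurf d F U ∧
    affSurf d (F ∘ φ) V = affSurf d F (φ '' V) :=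
  affine_surface_measure_invariance_general d hd F Ω hΩ hF U hUΩ A V hV φ ψ hφ himg hlr

end RadonParaboloid
end
end
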